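/- arXiv:2008.02008 — 8 statements merged into one kernel-verified Lean document; each statement's English description precedes it below -/
import Mathlib

section
/- For all positive integers k and n, every subset X of the grid {0,1,...,k}^n with |X| > k^n contains k+1 points x^0, x^1, ..., x^k such that the Chebyshev (max-norm) distance between x^s and x^t equals |s - t| for all 0 ≤ s, t ≤ k. -/
/-!
Call a point `x ∈ X` *climbing in direction `i`* if it starts a chain of points of `X`, each
within sup-distance `1` of the next and one unit lower in coordinate `i`, that reaches level `k`
in that coordinate. Such a chain is an isometric baton, so a climbing point with `x i = 0` gives
the required copy of `B_k`. If there is none, lower every point of `X` by one unit in each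
direction in which it climbs. This lands in `{0, …, k-1}^n`, and it is injective: two points
with the same image differ by at most `1` in every coordinate, and where they differ the lower
one could be prepended to the climb of the upper one. Hence `|X| ≤ k^n`.
-/

open Finset

theorem dist_eq_abs_sub_of_unit_steps {α : Type*} [PseudoMetricSpace α] {f : ℕ → α}
    {g : α → ℝ} (hg : LipschitzWith 1 g) {m : ℕ} (hdist : ∀ j < m, dist (f j) (f (j + 1)) ≤ 1)
    (hg_succ : ∀ j < m, g (f (j + 1)) = g (f j) + 1) {a b : ℕ} (ha : a ≤ m) (hb : b ≤ m) :
    dist (f a) (f b) = |(a : ℝ) - b| := by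
  have hg_eq : ∀ j ≤ m, g (f j) = g (f 0) + j := by
    intro j hj
    induction j with
    | zero => simp
    | succ j ih => rw [hg_succ j (by omega), ih (by omega)]; push_cast; ring
  wlog hab : a ≤ b generalizing a b
  · rw [dist_comm, abs_sub_comm]
    exact this hb ha (by omega)
  apply le_antisymm
  · calc dist (f a) (f b) ≤ ∑ j ∈ Ico a b, dist (f j) (f (j + 1)) := dist_le_Ico_sum_dist f hab
      _ ≤ ∑ _j ∈ Ico a b, (1 : ℝ) := sum_le_sum fun j hj => hdist j (by rw [mem_Ico] at hj; omega)
      _ = |(a : ℝ) - b| := by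
        rw [sum_const, Nat.card_Ico, nsmul_one, Nat.cast_sub hab, abs_sub_comm,
          abs_of_nonneg (by simpa using hab)]
  · calc |(a : ℝ) - b| = dist (g (f a)) (g (f b)) := by
          rw [Real.dist_eq, hg_eq a ha, hg_eq b hb]; ring_nf
      _ ≤ dist (f a) (f b) := by simpa using hg.dist_le_mul (f a) (f b)

variable {ι : Type*} [Fintype ι]

inductive Climbs (X : Set (ι → ℝ)) (i : ι) (k : ℝ) : (ι → ℝ) → Prop
  | top {x} : x ∈ X → x i = k → Climbs X i k x
  | step {x y} : y ∈ X → dist y x ≤ 1 → y i + 1 = x i → Climbs X i k x → Climbs X i k y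

namespace Climbs

variable {X : Set (ι → ℝ)} {i : ι}

theorem exists_chain {k : ℝ} {x : ι → ℝ} (h : Climbs X i k x) :
    ∃ (m : ℕ) (w : ℕ → ι → ℝ), w 0 = x ∧ x i + m = k ∧ (∀ j ≤ m, w j ∈ X) ∧
      ∀ j < m, dist (w j) (w (j + 1)) ≤ 1 ∧ w (j + 1) i = w j i + 1 := by
  induction h with
  | top hx hxk => exact ⟨0, fun _ => _, rfl, by simpa, fun _ _ => hx, by simp⟩
  | @step x y hy hyx hyi _ ih =>
    obtain ⟨m, w, hw0, hm, hmem, hsteps⟩ := ih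
    refine ⟨m + 1, fun j => Nat.casesOn j y w, rfl, by push_cast; linarith, ?_, ?_⟩
    · rintro (_ | j) hj
      exacts [hy, hmem j (by omega)]
    · rintro (_ | j) hj
      · subst hw0
        exact ⟨hyx, hyi.symm⟩
      · exact hsteps j (by omega)

theorem exists_baton {k : ℕ} {x : ι → ℝ} (h : Climbs X i k x) (hx : x i = 0) :
    ∃ w : Fin (k + 1) → ι → ℝ, (∀ s, w s ∈ X) ∧ ∀ s t, dist (w s) (w t) = |(s : ℝ) - t| := by
  obtain ⟨m, w, -, hm, hmem, hsteps⟩ := h.exists_chain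
  obtain rfl : m = k := by rw [hx, zero_add] at hm; exact_mod_cast hm
  refine ⟨fun s => w s, fun s => hmem s (by omega), fun s t => ?_⟩
  exact dist_eq_abs_sub_of_unit_steps (LipschitzWith.eval i) (fun j hj => (hsteps j hj).1)
    (fun j hj => (hsteps j hj).2) (by omega) (by omega)

end Climbs

open Classical in
noncomputable def descend (X : Set (ι → ℝ)) (k : ℝ) (x : ι → ℝ) : ι → ℝ :=
  fun i => x i - if Climbs X i k x then 1 else 0

theorem injOn_descend (X : Set (ι → ℝ)) (k : ℝ) : X.InjOn (descend X k) := by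
  classical
  intro x hx y hy hxy
  have hsub : ∀ i, x i - y i =
      (if Climbs X i k x then 1 else 0) - (if Climbs X i k y then 1 else 0) := fun i => by
    have := congrFun hxy i
    simp only [descend] at this
    linarith
  have hdist : dist x y ≤ 1 := (dist_pi_le_iff zero_le_one).2 fun i => by
    rw [Real.dist_eq, hsub]
    split_ifs <;> norm_num
  funext i
  have hi := hsub i
  split_ifs at hi with hxi hyi hyi
  · linarith
  · exact absurd (hxi.step hy (dist_comm x y ▸ hdist) (by linarith)) hyi
  · exact absurd (hyi.step hx hdist (by linarith)) hxi
  · linarith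

theorem descend_mem_piFinset [DecidableEq ι] {X : Set (ι → ℝ)} {k : ℕ}
    (hX : ∀ x ∈ X, ∀ i, ∃ j : ℕ, j ≤ k ∧ x i = j)
    (hzero : ∀ x ∈ X, ∀ i, x i = 0 → ¬Climbs X i k x) {x : ι → ℝ} (hx : x ∈ X) :
    descend X k x ∈ Fintype.piFinset fun _ => (range k).image (Nat.cast : ℕ → ℝ) := by
  rw [Fintype.mem_piFinset]
  intro i
  obtain ⟨j, hjk, hxj⟩ := hX x hx i
  simp only [descend, mem_image, mem_range]
  by_cases hclimb : Climbs X i k x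
  · have hj : j ≠ 0 := by rintro rfl; exact hzero x hx i (by simpa using hxj) hclimb
    exact ⟨j - 1, by omega, by rw [if_pos hclimb, hxj, Nat.cast_pred (by omega)]⟩
  · have hj : j ≠ k := by rintro rfl; exact hclimb (.top hx hxj)
    exact ⟨j, by omega, by rw [if_neg hclimb, hxj, sub_zero]⟩

theorem card_le_of_forall_not_climbs [DecidableEq ι] {X : Finset (ι → ℝ)} {k : ℕ}
    (hX : ∀ x ∈ X, ∀ i, ∃ j : ℕ, j ≤ k ∧ x i = j)
    (hzero : ∀ x ∈ X, ∀ i, x i = 0 → ¬Climbs X i k x) :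
    X.card ≤ k ^ Fintype.card ι := by
  calc X.card
      ≤ (Fintype.piFinset fun _ : ι => (range k).image (Nat.cast : ℕ → ℝ)).card :=
        card_le_card_of_injOn _ (fun _ hx => descend_mem_piFinset hX hzero hx)
          (injOn_descend _ _)
    _ = k ^ Fintype.card ι := by
        simp [card_image_of_injective _ Nat.cast_injective]

theorem stmt_0_general (k n : ℕ)
    (X : Finset (Fin n → ℝ))
    (hX : ∀ x ∈ X, ∀ i : Fin n, ∃ j : ℕ, j ≤ k ∧ x i = (j : ℝ))
    (hcard : X.card > k ^ n) :
    ∃ x : Fin (k + 1) → (Fin n → ℝ), (∀ s, x s ∈ X) ∧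
      ∀ s t : Fin (k + 1), dist (x s) (x t) = |(s : ℝ) - (t : ℝ)| := by
  by_contra hno
  have hzero : ∀ x ∈ X, ∀ i, x i = 0 → ¬Climbs (X : Set (Fin n → ℝ)) i k x :=
    fun _ _ _ hxi hclimb => hno (hclimb.exists_baton hxi)
  have hle := card_le_of_forall_not_climbs hX hzero
  rw [Fintype.card_fin] at hle
  omega

/-- Every subset `X` of the grid `{0,…,k}^n` with `|X| > k^n` contains an
isometric copy of the baton `B_k` in the Chebyshev (sup) metric. -/
theorem stmt_0 (k n : ℕ) (hk : 0 < k) (hn : 0 < n)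
    (X : Finset (Fin n → ℝ))
    (hX : ∀ x ∈ X, ∀ i : Fin n, ∃ j : ℕ, j ≤ k ∧ x i = (j : ℝ))
    (hcard : X.card > k ^ n) :
    ∃ x : Fin (k + 1) → (Fin n → ℝ), (∀ s, x s ∈ X) ∧
      ∀ s t : Fin (k + 1), dist (x s) (x t) = |(s : ℝ) - (t : ℝ)| :=
  stmt_0_general k n X hX hcard
end

section
/- For all positive integers k and n, if the points of R^n are colored with fewer than ⌈((k+1)/k)^n⌉ colors, then some color class contains k+1 points x^0, ..., x^k with ‖x^s - x^t‖_∞ = |s - t| for all s, t; equivalently, the chromatic number χ(R^n_∞; B_k) is at least ((k+1)/k)^n. -/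
/-!
A subset of the grid `{0, …, k}ⁿ` with no isometric copy of `B_k` has at most `kⁿ` points, by
induction on `n` (see `card_le_mul_of_not_containsBaton_prod`). The grid has `(k + 1)ⁿ > N kⁿ`
points, so some color class on it is larger than `kⁿ`.
-/

open Finset

section Baton

variable {X Y : Type*} [PseudoMetricSpace X] [PseudoMetricSpace Y] {k : ℕ}

def IsBaton (k : ℕ) (x : Fin (k + 1) → X) : Prop :=
  ∀ s t, dist (x s) (x t) = |(s : ℝ) - t|

def ContainsBaton (k : ℕ) (S : Set X) : Prop :=
  ∃ x : Fin (k + 1) → X, IsBaton k x ∧ ∀ i, x i ∈ S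

theorem IsBaton.dist_castSucc_succ {x : Fin (k + 1) → X} (hx : IsBaton k x) (i : Fin k) :
    dist (x i.castSucc) (x i.succ) = 1 := by
  rw [hx, Fin.val_castSucc, Fin.val_succ, Nat.cast_succ, sub_add_cancel_left, abs_neg, abs_one]

theorem ContainsBaton.mono {S T : Set X} (h : ContainsBaton k S) (hST : S ⊆ T) :
    ContainsBaton k T :=
  let ⟨x, hx, hxS⟩ := h
  ⟨x, hx, fun i => hST (hxS i)⟩

theorem Isometry.containsBaton_image_iff {f : X → Y} (hf : Isometry f) {S : Set X} :
    ContainsBaton k (f '' S) ↔ ContainsBaton k S := by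
  constructor
  · rintro ⟨y, hy, hyS⟩
    choose x hxS hxy using hyS
    refine ⟨x, fun s t => ?_, hxS⟩
    rw [← hf.dist_eq, hxy, hxy, hy]
  · rintro ⟨x, hx, hxS⟩
    exact ⟨f ∘ x, fun s t => by rw [Function.comp_apply, Function.comp_apply, hf.dist_eq, hx],
      fun i => Set.mem_image_of_mem f (hxS i)⟩

/-- Consecutive points of a baton are at distance `1`, so a baton cannot jump between two sets
more than `1` apart. -/
theorem containsBaton_union_iff {A B : Set X} (hAB : ∀ a ∈ A, ∀ b ∈ B, 1 < dist a b) :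
    ContainsBaton k (A ∪ B) ↔ ContainsBaton k A ∨ ContainsBaton k B := by
  refine ⟨fun ⟨x, hx, hxAB⟩ => ?_, fun h => h.elim (·.mono Set.subset_union_left)
    (·.mono Set.subset_union_right)⟩
  have hstay : ∀ {p q}, q ∈ A ∪ B → dist p q ≤ 1 → p ∈ A → q ∈ A := fun hq hpq hp =>
    hq.resolve_right fun hq' => (hAB _ hp _ hq').not_ge hpq
  have hconst : ∀ i, x i ∈ A ↔ x 0 ∈ A := by
    refine Fin.induction Iff.rfl fun i ih => ?_
    have hstep := hx.dist_castSucc_succ i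
    rw [← ih]
    exact ⟨hstay (hxAB _) (by rw [dist_comm, hstep]), hstay (hxAB _) hstep.le⟩
  by_cases h0 : x 0 ∈ A
  · exact Or.inl ⟨x, hx, fun i => (hconst i).2 h0⟩
  · exact Or.inr ⟨x, hx, fun i => (hxAB i).resolve_left fun h => h0 ((hconst i).1 h)⟩

end Baton

theorem isometry_prodMk_right {α β : Type*} [PseudoEMetricSpace α] [PseudoEMetricSpace β]
    (a : α) : Isometry fun b : β => (a, b) := fun b b' => by
  simp [Prod.edist_eq]

theorem dist_le_of_dist_succ_le_one {X : Type*} [PseudoMetricSpace X] {w : ℕ → X} {n : ℕ}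
    (hw : ∀ s < n, dist (w s) (w (s + 1)) ≤ 1) {s t : ℕ} (hs : s ≤ n) (ht : t ≤ n) :
    dist (w s) (w t) ≤ dist s t := by
  wlog hst : s ≤ t generalizing s t
  · rw [dist_comm, dist_comm s]
    exact this ht hs (by omega)
  calc dist (w s) (w t) ≤ ∑ _i ∈ Ico s t, (1 : ℝ) :=
        dist_le_Ico_sum_of_dist_le hst fun _ hi => hw _ (by omega)
    _ = dist s t := by
        rw [sum_const, Nat.card_Ico, nsmul_one, Nat.dist_eq, Nat.cast_sub hst, abs_sub_comm,
          abs_of_nonneg (by simpa using hst)]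

section Layer

variable {X : Type*}

noncomputable def layer (S : Finset (ℕ × X)) (t : ℕ) : Finset X :=
  S.preimage (Prod.mk t) (Prod.mk_right_injective t).injOn

@[simp]
theorem mem_layer {S : Finset (ℕ × X)} {t : ℕ} {x : X} : x ∈ layer S t ↔ (t, x) ∈ S :=
  mem_preimage

theorem card_eq_sum_card_layer {S : Finset (ℕ × X)} {s : Finset ℕ} (hS : ∀ p ∈ S, p.1 ∈ s) :
    #S = ∑ t ∈ s, #(layer S t) := by
  classical
  rw [card_eq_sum_card_fiberwise hS]
  refine sum_congr rfl fun t _ => ?_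
  rw [layer, card_preimage]
  congr 1
  ext ⟨a, x⟩
  simp [eq_comm]

variable [PseudoMetricSpace X] {k : ℕ}

theorem ContainsBaton.of_layer {S : Finset (ℕ × X)} {t : ℕ}
    (h : ContainsBaton k (layer S t : Set X)) : ContainsBaton k (S : Set (ℕ × X)) := by
  refine ((isometry_prodMk_right t).containsBaton_image_iff.2 h).mono ?_
  rintro _ ⟨x, hx, rfl⟩
  simpa using hx

def ReachableFromBase (S : Finset (ℕ × X)) (t : ℕ) (x : X) : Prop :=
  ∃ w : ℕ → X, w t = x ∧ (∀ s ≤ t, (s, w s) ∈ S) ∧ ∀ s < t, dist (w s) (w (s + 1)) ≤ 1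

theorem reachableFromBase_zero {S : Finset (ℕ × X)} {x : X} (hx : (0, x) ∈ S) :
    ReachableFromBase S 0 x :=
  ⟨fun _ => x, rfl, fun s hs => by rwa [Nat.le_zero.1 hs],
    fun _ hs => absurd hs (Nat.not_lt_zero _)⟩

theorem ReachableFromBase.succ {S : Finset (ℕ × X)} {t : ℕ} {r x : X}
    (hr : ReachableFromBase S t r) (hx : (t + 1, x) ∈ S) (hrx : dist r x ≤ 1) :
    ReachableFromBase S (t + 1) x := by
  obtain ⟨w, rfl, hwS, hw⟩ := hr
  refine ⟨fun s => if s ≤ t then w s else x, by simp, fun s hs => ?_, fun s hs => ?_⟩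
  · by_cases hst : s ≤ t
    · simpa [hst] using hwS s hst
    · simpa [hst, show s = t + 1 by omega] using hx
  · by_cases hst : s + 1 ≤ t
    · simpa [hst, (Nat.le_succ s).trans hst] using hw s hst
    · simpa [show s = t by omega] using hrx

theorem ReachableFromBase.containsBaton {S : Finset (ℕ × X)} {x : X}
    (hx : ReachableFromBase S k x) : ContainsBaton k (S : Set (ℕ × X)) := by
  obtain ⟨w, -, hwS, hw⟩ := hx
  refine ⟨fun s => ((s : ℕ), w s), fun s t => ?_, fun s => hwS s s.is_le⟩
  rw [Prod.dist_eq, max_eq_left (dist_le_of_dist_succ_le_one hw s.is_le t.is_le), Nat.dist_eq]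

end Layer

/-- Split each layer `S_t` into the points `R_t` reachable from the bottom layer and the rest `A_t`.
Then `A_0 = ∅`, `R_k = ∅` (a chain through all layers is a baton), and `R_t ∪ A_(t+1)` is a
baton-free subset of `P` for every `t < k`, because `A_(t+1)` is at distance more than `1`
from `R_t`. -/
theorem card_le_mul_of_not_containsBaton_prod {X : Type*} [PseudoMetricSpace X] {k m : ℕ}
    {P : Set X} (hP : ∀ T : Finset X, ↑T ⊆ P → ¬ContainsBaton k (T : Set X) → #T ≤ m)
    {S : Finset (ℕ × X)} (hSP : ↑S ⊆ Set.Iic k ×ˢ P) (hS : ¬ContainsBaton k (S : Set (ℕ × X))) :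
    #S ≤ k * m := by
  classical
  set R := fun t => (layer S t).filter (ReachableFromBase S t)
  set A := fun t => (layer S t).filter (¬ReachableFromBase S t ·)
  have hR_last : R k = ∅ := filter_eq_empty_iff.2 fun _ _ hx => hS hx.containsBaton
  have hA_zero : A 0 = ∅ :=
    filter_eq_empty_iff.2 fun _ hx hx' => hx' (reachableFromBase_zero (mem_layer.1 hx))
  have hpair : ∀ t, #(R t) + #(A (t + 1)) ≤ m := by
    intro t
    have hsep : ∀ r ∈ R t, ∀ a ∈ A (t + 1), 1 < dist r a := by
      intro r hr a ha
      by_contra! hra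
      exact (mem_filter.1 ha).2 ((mem_filter.1 hr).2.succ (mem_layer.1 (mem_filter.1 ha).1) hra)
    have hdisj : Disjoint (R t) (A (t + 1)) :=
      disjoint_left.2 fun x hx hx' => by linarith [hsep x hx x hx', dist_self x]
    rw [← card_union_of_disjoint hdisj]
    refine hP _ (fun x hx => ?_) fun h => ?_
    · obtain ⟨s, hs⟩ : ∃ s, (s, x) ∈ S := by
        rcases mem_union.1 hx with hx | hx <;> exact ⟨_, mem_layer.1 (mem_filter.1 hx).1⟩
      exact (hSP hs).2
    · rw [coe_union, containsBaton_union_iff (by simpa using hsep)] at h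
      rcases h with h | h
      · exact hS (h.mono (filter_subset _ _)).of_layer
      · exact hS (h.mono (filter_subset _ _)).of_layer
  have hlayer : ∀ t, #(layer S t) = #(R t) + #(A t) := fun t =>
    (card_filter_add_card_filter_not _).symm
  calc #S = ∑ t ∈ range (k + 1), #(layer S t) :=
        card_eq_sum_card_layer fun p hp => mem_range_succ_iff.2 (hSP hp).1
    _ = ∑ t ∈ range k, (#(R t) + #(A (t + 1))) := by
        rw [sum_congr rfl fun t _ => hlayer t, sum_add_distrib, sum_range_succ, sum_range_succ' _ k,
          hR_last, hA_zero, sum_add_distrib]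
        simp
    _ ≤ ∑ _t ∈ range k, m := sum_le_sum fun t _ => hpair t
    _ = k * m := by simp

theorem card_le_pow_of_not_containsBaton {k : ℕ} : ∀ {n : ℕ} {S : Finset (Fin n → ℕ)},
    (∀ v ∈ S, ∀ i, v i ≤ k) → ¬ContainsBaton k (S : Set (Fin n → ℕ)) → #S ≤ k ^ n
  | 0, S, _, _ => by simpa using card_le_one_of_subsingleton S
  | n + 1, S, hSk, hS => by
    have hsplit : Isometry fun v : Fin (n + 1) → ℕ => (v 0, Fin.tail v) := fun v v' => by
      simp [edist_pi_def, Fin.univ_succ, Prod.edist_eq, Fin.tail, Function.comp_def]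
    rw [← card_image_of_injective S hsplit.injective, pow_succ']
    refine card_le_mul_of_not_containsBaton_prod (P := {u : Fin n → ℕ | ∀ i, u i ≤ k})
      (fun T hT hTb => card_le_pow_of_not_containsBaton (fun v hv => hT hv) hTb) ?_ ?_
    · simp only [coe_image, Set.image_subset_iff]
      exact fun v hv => ⟨hSk v hv 0, fun i => hSk v hv i.succ⟩
    · rwa [coe_image, hsplit.containsBaton_image_iff]

theorem stmt_1_general (k n : ℕ) (hk : 0 < k) (N : ℕ)
    (hN : (N : ℝ) < (((k : ℝ) + 1) / (k : ℝ)) ^ n)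
    (c : (Fin n → ℝ) → Fin N) :
    ∃ x : Fin (k + 1) → (Fin n → ℝ),
      (∀ s t : Fin (k + 1), c (x s) = c (x t)) ∧
      ∀ s t : Fin (k + 1), dist (x s) (x t) = |(s : ℝ) - (t : ℝ)| := by
  classical
  have hNk : N * k ^ n < (k + 1) ^ n := by
    rw [div_pow, lt_div_iff₀ (by positivity)] at hN
    exact_mod_cast hN
  set G := Fintype.piFinset fun _ : Fin n => range (k + 1)
  set ι : (Fin n → ℕ) → (Fin n → ℝ) := Pi.map fun _ => Nat.cast
  have hι : Isometry ι := Isometry.piMap _ fun _ => Isometry.of_dist_eq fun _ _ => rfl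
  obtain ⟨color, -, hcolor⟩ := exists_lt_card_fiber_of_mul_lt_card_of_maps_to
    (s := G) (f := c ∘ ι) (fun v _ => mem_univ (c (ι v))) (n := k ^ n) (by simpa [G] using hNk)
  obtain ⟨x, hx, hxS⟩ : ContainsBaton k (↑{v ∈ G | (c ∘ ι) v = color} : Set (Fin n → ℕ)) := by
    by_contra h
    refine hcolor.not_ge (card_le_pow_of_not_containsBaton (fun v hv i => ?_) h)
    simpa [G, Nat.lt_succ_iff] using Fintype.mem_piFinset.1 (mem_filter.1 hv).1 i
  refine ⟨ι ∘ x, fun s t => ?_, fun s t => ?_⟩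
  · exact (mem_filter.1 (hxS s)).2.trans (mem_filter.1 (hxS t)).2.symm
  · rw [Function.comp_apply, Function.comp_apply, hι.dist_eq, hx]

/-- If `ℝ^n` with the max metric is colored with fewer than `((k+1)/k)^n` colors,
then there is a monochromatic isometric copy of the baton `B_k`; i.e.
`χ(ℝ^n_∞; B_k) ≥ ((k+1)/k)^n`. -/
theorem stmt_1 (k n : ℕ) (hk : 0 < k) (hn : 0 < n) (N : ℕ)
    (hN : (N : ℝ) < (((k : ℝ) + 1) / (k : ℝ)) ^ n)
    (c : (Fin n → ℝ) → Fin N) :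
    ∃ x : Fin (k + 1) → (Fin n → ℝ),
      (∀ s t : Fin (k + 1), c (x s) = c (x t)) ∧
      ∀ s t : Fin (k + 1), dist (x s) (x t) = |(s : ℝ) - (t : ℝ)| :=
  stmt_1_general k n hk N hN c
end

section
/- For every positive integer n, χ(R^n_∞) = 2^n, where χ(R^n_∞) is the minimum number of colors needed to color R^n so that no two points at Chebyshev distance exactly 1 receive the same color. -/
/-!
Color `x` by the parities of `⌊x i⌋`. If `‖x - y‖_∞ = 1`, some coordinate has
`|x i - y i| = 1`, so `⌊x i⌋` and `⌊y i⌋` differ by one and the colors differ: `2^n` colors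
suffice. Conversely, the `2^n` vertices of the unit cube `{0,1}^n` are pairwise at Chebyshev
distance exactly `1`, so they need `2^n` distinct colors.
-/

theorem exists_dist_apply_eq_of_dist_eq {ι : Type*} [Fintype ι] {π : ι → Type*}
    [∀ i, PseudoMetricSpace (π i)] {x y : ∀ i, π i} {r : ℝ} (hr : 0 < r) (h : dist x y = r) :
    ∃ i, dist (x i) (y i) = r := by
  by_contra! hne
  have hlt : ∀ i, dist (x i) (y i) < r := fun i =>
    lt_of_le_of_ne (h ▸ dist_le_pi_dist x y i) (hne i)
  exact (dist_pi_lt_iff hr).2 hlt |>.ne h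

theorem Int.cast_floor_ne_of_dist_eq_one {a b : ℝ} (h : dist a b = 1) :
    (⌊a⌋ : ZMod 2) ≠ ⌊b⌋ := by
  have of_eq_add_one : ∀ {a b : ℝ}, a = b + 1 → (⌊a⌋ : ZMod 2) ≠ ⌊b⌋ := by
    rintro a b rfl hab
    rw [Int.floor_add_one, Int.cast_add, Int.cast_one, add_eq_left] at hab
    exact absurd hab (by decide)
  rw [Real.dist_eq, abs_eq zero_le_one] at h
  rcases h with h | h
  · exact of_eq_add_one (by linarith)
  · exact (of_eq_add_one (by linarith)).symm

theorem floor_parity_ne_of_dist_eq_one {ι : Type*} [Fintype ι] {x y : ι → ℝ}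
    (h : dist x y = 1) : (fun i => (⌊x i⌋ : ZMod 2)) ≠ fun i => (⌊y i⌋ : ZMod 2) := by
  obtain ⟨i, hi⟩ := exists_dist_apply_eq_of_dist_eq one_pos h
  exact fun hxy => Int.cast_floor_ne_of_dist_eq_one hi (congrFun hxy i)

theorem dist_cast_fin_two (a b : Fin 2) :
    dist ((a : ℕ) : ℝ) ((b : ℕ) : ℝ) = if a = b then 0 else 1 := by
  fin_cases a <;> fin_cases b <;> norm_num

theorem dist_cast_fin_two_pi_eq_one_of_ne {ι : Type*} [Fintype ι] {u v : ι → Fin 2} (huv : u ≠ v) :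
    dist (fun i => ((u i : ℕ) : ℝ)) (fun i => ((v i : ℕ) : ℝ)) = 1 := by
  obtain ⟨j, hj⟩ := Function.ne_iff.mp huv
  apply le_antisymm
  · refine (dist_pi_le_iff zero_le_one).2 fun i => ?_
    rw [dist_cast_fin_two]
    split_ifs <;> norm_num
  · calc (1 : ℝ) = dist ((u j : ℕ) : ℝ) ((v j : ℕ) : ℝ) := by rw [dist_cast_fin_two, if_neg hj]
      _ ≤ _ := dist_le_pi_dist (fun i => ((u i : ℕ) : ℝ)) (fun i => ((v i : ℕ) : ℝ)) j

theorem stmt_4_general (n : ℕ) :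
    IsLeast {N : ℕ | ∃ c : (Fin n → ℝ) → Fin N,
      ∀ x y : Fin n → ℝ, dist x y = 1 → c x ≠ c y} (2 ^ n) := by
  constructor
  · let e : (Fin n → ZMod 2) ≃ Fin (2 ^ n) := Fintype.equivFinOfCardEq (by simp [ZMod.card])
    refine ⟨fun x => e fun i => (⌊x i⌋ : ZMod 2), fun x y hxy hc => ?_⟩
    exact floor_parity_ne_of_dist_eq_one hxy (e.injective hc)
  · rintro N ⟨c, hc⟩
    let f : (Fin n → Fin 2) → Fin N := fun u => c fun i => ((u i : ℕ) : ℝ)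
    have hf : Function.Injective f := fun u v huv => by
      by_contra hne
      exact hc _ _ (dist_cast_fin_two_pi_eq_one_of_ne hne) huv
    simpa using Fintype.card_le_of_injective f hf

/-- `χ(ℝ^n_∞) = 2^n`: `2^n` is the least number of colors with which `ℝ^n`
(max metric) can be colored so that no two points at Chebyshev distance exactly
`1` receive the same color. -/
theorem stmt_4 (n : ℕ) (hn : 0 < n) :
    IsLeast {N : ℕ | ∃ c : (Fin n → ℝ) → Fin N,
      ∀ x y : Fin n → ℝ, dist x y = 1 → c x ≠ c y} (2 ^ n) :=
  stmt_4_general n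
end

section
/- For every real α > 1 and every positive integer n, the chromatic number χ(R^n_∞; B(1,α)) is at least ((⌈α⌉+2)/(⌈α⌉+1))^n. In particular, B(1,α) is exponentially ℓ∞-Ramsey. -/
/-!
Let `m = ⌈α⌉ + 1` and map the grid `{0, …, m}ⁿ` into `ℝⁿ` coordinatewise by a monotone `f` with
unit steps sending `0, 1, …, m - 2, m - 1, m` to `0, 1, …, m - 2, α, α + 1`. Call `(x, y, z)` a
baton if `x, y` differ by at most one in every coordinate, `y, z` are never opposite ends of the
chain in the same coordinate, and some coordinate reads `(0, 1, m)` or `(m, m - 1, 0)`; then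
`f ∘ x, f ∘ y, f ∘ z` is an isometric copy of `{0, 1, 1 + α}` in the sup metric. With fewer than
`((m + 1) / m)ⁿ` colours some colour class has more than `mⁿ` of the `(m + 1)ⁿ` grid points,
whereas an induction on `n` shows that a baton-free set has at most `mⁿ` points.
-/

namespace Baton

open Finset

def Near (a b : ℕ) : Prop := a ≤ b + 1 ∧ b ≤ a + 1

def Antipodal (m a b : ℕ) : Prop := (a = 0 ∧ b = m) ∨ (a = m ∧ b = 0)

lemma Near.symm {a b : ℕ} (h : Near a b) : Near b a := ⟨h.2, h.1⟩

lemma Near.not_antipodal {m a b : ℕ} (hm : 2 ≤ m) (h : Near a b) : ¬ Antipodal m a b := by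
  unfold Near Antipodal at *
  omega

def Tight (m a b c : ℕ) : Prop := (a = 0 ∧ b = 1 ∧ c = m) ∨ (a = m ∧ b = m - 1 ∧ c = 0)

def IsBaton (m : ℕ) {n : ℕ} (x y z : Fin n → ℕ) : Prop :=
  (∀ i, Near (x i) (y i)) ∧ (∀ i, ¬ Antipodal m (y i) (z i)) ∧ ∃ i, Tight m (x i) (y i) (z i)

def BatonFree (m : ℕ) {n : ℕ} (W : Finset (Fin n → ℕ)) : Prop :=
  ∀ x ∈ W, ∀ y ∈ W, ∀ z ∈ W, ¬ IsBaton m x y z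

def cube (m n : ℕ) : Finset (Fin n → ℕ) := Fintype.piFinset fun _ ↦ range (m + 1)

lemma mem_cube {m n : ℕ} {x : Fin n → ℕ} : x ∈ cube m n ↔ ∀ i, x i ≤ m := by
  simp [cube]

lemma card_cube (m n : ℕ) : (cube m n).card = (m + 1) ^ n := by
  simp [cube]

lemma isBaton_snoc_iff {m n : ℕ} {x y z : Fin n → ℕ} {s t u : ℕ} :
    IsBaton m (Fin.snoc x s : Fin (n + 1) → ℕ) (Fin.snoc y t) (Fin.snoc z u) ↔
      ((∀ i, Near (x i) (y i)) ∧ Near s t) ∧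
      ((∀ i, ¬ Antipodal m (y i) (z i)) ∧ ¬ Antipodal m t u) ∧
      ((∃ i, Tight m (x i) (y i) (z i)) ∨ Tight m s t u) := by
  simp only [IsBaton, Fin.forall_fin_succ', Fin.exists_fin_succ', Fin.snoc_castSucc, Fin.snoc_last]

section Slice

variable {m n : ℕ} {W : Finset (Fin (n + 1) → ℕ)} {s t u : ℕ}

def slice (W : Finset (Fin (n + 1) → ℕ)) (t : ℕ) : Finset (Fin n → ℕ) :=
  (W.filter (· (Fin.last n) = t)).image Fin.init

@[simp]
lemma mem_slice {a : Fin n → ℕ} : a ∈ slice W t ↔ (Fin.snoc a t : Fin (n + 1) → ℕ) ∈ W := by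
  simp only [slice, mem_image, mem_filter]
  constructor
  · rintro ⟨x, ⟨hx, rfl⟩, rfl⟩
    rwa [Fin.snoc_init_self]
  · exact fun h ↦ ⟨_, ⟨h, Fin.snoc_last _ _⟩, Fin.init_snoc _ _⟩

lemma card_slice (t : ℕ) : (slice W t).card = (W.filter (· (Fin.last n) = t)).card := by
  refine card_image_of_injOn fun x hx y hy hxy ↦ ?_
  rw [← Fin.snoc_init_self x, ← Fin.snoc_init_self y, hxy, (mem_filter.1 hx).2,
    (mem_filter.1 hy).2]

lemma card_eq_sum_card_slice (hW : W ⊆ cube m (n + 1)) :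
    W.card = ∑ t ∈ range (m + 1), (slice W t).card := by
  rw [card_eq_sum_card_fiberwise (f := (· (Fin.last n)))
    fun x hx ↦ mem_range_succ_iff.2 (mem_cube.1 (hW hx) _)]
  simp only [card_slice]

lemma slice_subset_cube (hW : W ⊆ cube m (n + 1)) (t : ℕ) : slice W t ⊆ cube m n := by
  intro a ha
  rw [mem_cube]
  intro i
  simpa using mem_cube.1 (hW (mem_slice.1 ha)) i.castSucc

lemma BatonFree.not_isBaton_of_mem_slice (hW : BatonFree m W) {x y z : Fin n → ℕ}
    (hx : x ∈ slice W s) (hy : y ∈ slice W t) (hz : z ∈ slice W u)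
    (hst : Near s t) (htu : ¬ Antipodal m t u) : ¬ IsBaton m x y z := fun h ↦
  hW _ (mem_slice.1 hx) _ (mem_slice.1 hy) _ (mem_slice.1 hz)
    (isBaton_snoc_iff.2 ⟨⟨h.1, hst⟩, ⟨h.2.1, htu⟩, Or.inl h.2.2⟩)

lemma BatonFree.slice_union (hW : BatonFree m W) (hm : 2 ≤ m) (hst : Near s t) :
    BatonFree m (slice W s ∪ slice W t) := by
  intro x hx y hy z hz
  unfold Near at hst
  simp only [mem_union] at hx hy hz
  rcases hx with hx | hx <;> rcases hy with hy | hy <;> rcases hz with hz | hz <;>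
    exact hW.not_isBaton_of_mem_slice hx hy hz (by unfold Near; omega)
      (by unfold Antipodal; omega)

lemma batonFree_slice (hW : BatonFree m W) (hm : 2 ≤ m) (t : ℕ) : BatonFree m (slice W t) := by
  simpa using hW.slice_union hm (s := t) (t := t) (by unfold Near; omega)

lemma BatonFree.exists_antipodal (hW : BatonFree m W) {a d : Fin n → ℕ}
    (ha₀ : a ∈ slice W 0) (ha₁ : a ∈ slice W 1) (hd : d ∈ slice W m) :
    ∃ i, Antipodal m (a i) (d i) := by
  by_contra! h
  refine hW _ (mem_slice.1 ha₀) _ (mem_slice.1 ha₁) _ (mem_slice.1 hd)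
    (isBaton_snoc_iff.2 ⟨⟨fun i ↦ ?_, ?_⟩, ⟨h, ?_⟩, Or.inr (Or.inl ⟨rfl, rfl, rfl⟩)⟩) <;>
    dsimp only [Near, Antipodal] <;> omega

lemma BatonFree.inter_union_inter (hW : BatonFree m W) (hm : 3 ≤ m) :
    BatonFree m (slice W 0 ∩ slice W 1 ∪ slice W (m - 1) ∩ slice W m) := by
  intro x hx y hy z hz h
  simp only [mem_union, mem_inter] at hx hy hz
  rcases hy with ⟨hy₀, hy₁⟩ | ⟨hy₂, hy₃⟩ <;> rcases hx with ⟨hx₀, hx₁⟩ | ⟨hx₂, hx₃⟩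
  · rcases hz with ⟨-, hz⟩ | ⟨hz, -⟩ <;>
      exact hW.not_isBaton_of_mem_slice hx₀ hy₁ hz (by unfold Near; omega)
        (by unfold Antipodal; omega) h
  · obtain ⟨i, hi⟩ := hW.exists_antipodal hy₀ hy₁ hx₃
    exact (h.1 i).symm.not_antipodal (by omega) hi
  · obtain ⟨i, hi⟩ := hW.exists_antipodal hx₀ hx₁ hy₃
    exact (h.1 i).not_antipodal (by omega) hi
  · rcases hz with ⟨-, hz⟩ | ⟨hz, -⟩ <;>
      exact hW.not_isBaton_of_mem_slice hx₃ hy₂ hz (by unfold Near; omega)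
        (by unfold Antipodal; omega) h

end Slice

/-- Slice along the last coordinate: besides the single slices, the sets `S₀ ∪ S₁`,
`S₀ ∩ S₁ ∪ Sₘ₋₁ ∩ Sₘ` and `Sₘ₋₁ ∪ Sₘ` are baton-free, so the four extreme slices together have
at most `3 mⁿ` points. -/
theorem card_le_pow_of_batonFree {m : ℕ} (hm : 3 ≤ m) :
    ∀ {n : ℕ} {W : Finset (Fin n → ℕ)}, W ⊆ cube m n → BatonFree m W → W.card ≤ m ^ n
  | 0, W, _, _ => by simpa using card_le_univ W
  | n + 1, W, hWc, hW => by
    set S := slice W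
    have hSc := slice_subset_cube hWc
    have hS (t : ℕ) : (S t).card ≤ m ^ n :=
      card_le_pow_of_batonFree hm (hSc t) (batonFree_slice hW (by omega) t)
    have hbot : (S 0 ∪ S 1).card ≤ m ^ n :=
      card_le_pow_of_batonFree hm (union_subset (hSc 0) (hSc 1))
        (hW.slice_union (by omega) (by unfold Near; omega))
    have htop : (S (m - 1) ∪ S m).card ≤ m ^ n :=
      card_le_pow_of_batonFree hm (union_subset (hSc _) (hSc m))
        (hW.slice_union (by omega) (by unfold Near; omega))
    have hmid : (S 0 ∩ S 1 ∪ S (m - 1) ∩ S m).card ≤ m ^ n :=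
      card_le_pow_of_batonFree hm
        (union_subset (inter_subset_left.trans (hSc 0)) (inter_subset_left.trans (hSc _)))
        (hW.inter_union_inter hm)
    have hdisj : Disjoint (S 0 ∩ S 1) (S (m - 1) ∩ S m) := by
      refine disjoint_left.2 fun a ha ha' ↦ ?_
      obtain ⟨i, hi⟩ := hW.exists_antipodal (mem_inter.1 ha).1 (mem_inter.1 ha).2
        (mem_inter.1 ha').2
      unfold Antipodal at hi
      omega
    have hext : (S 0).card + (S 1).card + (S (m - 1)).card + (S m).card ≤ 3 * m ^ n := by
      have := card_union_add_card_inter (S 0) (S 1)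
      have := card_union_add_card_inter (S (m - 1)) (S m)
      have := card_union_of_disjoint hdisj
      omega
    obtain ⟨p, rfl⟩ : ∃ p, m = p + 3 := ⟨m - 3, by omega⟩
    have hrest : ∑ t ∈ range p, (S (t + 2)).card ≤ p * (p + 3) ^ n := by
      simpa using sum_le_card_nsmul (range p) _ _ fun t _ ↦ hS (t + 2)
    rw [card_eq_sum_card_slice hWc, sum_range_succ, sum_range_succ, sum_range_succ',
      sum_range_succ', pow_succ]
    simp only [show p + 3 - 1 = p + 2 from rfl] at hext
    nlinarith

structure BatonProfile (m : ℕ) (α : ℝ) (f : ℕ → ℝ) : Prop where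
  mono : Monotone f
  step_le : ∀ j, f (j + 1) ≤ f j + 1
  map_zero : f 0 = 0
  map_one : f 1 = 1
  map_pred : f (m - 1) = α
  map_self : f m = α + 1

namespace BatonProfile

variable {m : ℕ} {α : ℝ} {f : ℕ → ℝ}

lemma abs_sub_le_one_of_near (hf : BatonProfile m α f) {a b : ℕ} (h : Near a b) :
    |f a - f b| ≤ 1 := by
  wlog hab : a ≤ b generalizing a b
  · rw [abs_sub_comm]
    exact this ⟨h.2, h.1⟩ (by omega)
  rw [abs_sub_comm, abs_of_nonneg (sub_nonneg.2 (hf.mono hab))]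
  obtain rfl | rfl : b = a ∨ b = a + 1 := by unfold Near at h; omega
  · simp
  · linarith [hf.step_le a]

lemma abs_sub_le_of_not_antipodal (hf : BatonProfile m α f) {a b : ℕ} (ha : a ≤ m) (hb : b ≤ m)
    (h : ¬ Antipodal m a b) : |f a - f b| ≤ α := by
  wlog hab : a ≤ b generalizing a b
  · rw [abs_sub_comm]
    exact this hb ha (by unfold Antipodal at *; omega) (by omega)
  rw [abs_sub_comm, abs_of_nonneg (sub_nonneg.2 (hf.mono hab))]
  rcases Nat.eq_zero_or_pos a with rfl | ha₀
  · have : b ≤ m - 1 := by unfold Antipodal at h; omega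
    linarith [hf.mono this, hf.map_zero, hf.map_pred]
  · linarith [hf.mono hb, hf.mono (show 1 ≤ a from ha₀), hf.map_one, hf.map_self]

lemma abs_sub_of_tight (hf : BatonProfile m α f) {a b c : ℕ} (h : Tight m a b c) :
    |f a - f b| = 1 ∧ |f b - f c| = α ∧ |f a - f c| = α + 1 := by
  have hα : 0 ≤ α := by simpa [hf.map_zero, hf.map_pred] using hf.mono (Nat.zero_le (m - 1))
  rcases h with ⟨rfl, rfl, rfl⟩ | ⟨rfl, rfl, rfl⟩ <;>
    simp only [hf.map_zero, hf.map_one, hf.map_pred, hf.map_self] <;>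
    refine ⟨?_, ?_, ?_⟩ <;>
    rw [abs_eq (by linarith)] <;> norm_num

theorem dist_comp_of_isBaton (hf : BatonProfile m α f) (hα : 0 < α) {n : ℕ}
    {x y z : Fin n → ℕ} (hy : y ∈ cube m n) (hz : z ∈ cube m n) (h : IsBaton m x y z) :
    dist (f ∘ x) (f ∘ y) = 1 ∧ dist (f ∘ y) (f ∘ z) = α ∧ dist (f ∘ x) (f ∘ z) = α + 1 := by
  obtain ⟨i, hi⟩ := h.2.2
  have hxy (j : Fin n) := hf.abs_sub_le_one_of_near (h.1 j)
  have hyz (j : Fin n) :=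
    hf.abs_sub_le_of_not_antipodal (mem_cube.1 hy j) (mem_cube.1 hz j) (h.2.1 j)
  obtain ⟨hxyi, hyzi, hxzi⟩ := hf.abs_sub_of_tight hi
  simp only [dist_pi_eq_iff one_pos, dist_pi_eq_iff hα, dist_pi_eq_iff (by linarith : 0 < α + 1),
    Function.comp_apply, Real.dist_eq]
  exact ⟨⟨⟨i, hxyi⟩, hxy⟩, ⟨⟨i, hyzi⟩, hyz⟩,
    ⟨⟨i, hxzi⟩, fun j ↦ (abs_sub_le _ _ _).trans (by linarith [hxy j, hyz j])⟩⟩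

end BatonProfile

lemma batonProfile_ceil {α : ℝ} (hα : 1 < α) :
    BatonProfile (⌈α⌉₊ + 1) α fun j ↦ j + if ⌈α⌉₊ ≤ j then α - ⌈α⌉₊ else 0 := by
  set k := ⌈α⌉₊
  set f : ℕ → ℝ := fun j ↦ j + if k ≤ j then α - k else 0 with hf
  have hk : 1 < k := Nat.lt_ceil.2 (by exact_mod_cast hα)
  have hαk : α ≤ k := Nat.le_ceil α
  have hkα : (k : ℝ) < α + 1 := Nat.ceil_lt_add_one (by linarith)
  have step (j : ℕ) : f j ≤ f (j + 1) ∧ f (j + 1) ≤ f j + 1 := by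
    simp only [hf]
    push_cast
    rcases lt_trichotomy (j + 1) k with h | h | h
    · rw [if_neg (by omega), if_neg (by omega)]
      constructor <;> linarith
    · have hj : (j : ℝ) + 1 = k := by exact_mod_cast h
      rw [if_neg (by omega), if_pos h.ge]
      constructor <;> linarith
    · rw [if_pos (by omega), if_pos (by omega)]
      constructor <;> linarith
  refine ⟨monotone_nat_of_le_succ fun j ↦ (step j).1, fun j ↦ (step j).2, ?_, ?_, ?_, ?_⟩
  · simp [hf, show ¬ k ≤ 0 by omega]
  · simp [hf, show ¬ k ≤ 1 by omega]
  · simp [hf]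
  · simp [hf]
    ring

end Baton

open Baton Finset in
theorem stmt_6_general (α : ℝ) (hα : 1 < α) (n : ℕ) (N : ℕ)
    (hN : (N : ℝ) < (((⌈α⌉₊ : ℝ) + 2) / ((⌈α⌉₊ : ℝ) + 1)) ^ n)
    (c : (Fin n → ℝ) → Fin N) :
    ∃ u v w : Fin n → ℝ,
      c u = c v ∧ c v = c w ∧
      dist u v = 1 ∧ dist v w = α ∧ dist u w = α + 1 := by
  classical
  set m := ⌈α⌉₊ + 1 with hm_def
  have hm : 3 ≤ m := by
    have : 1 < ⌈α⌉₊ := Nat.lt_ceil.2 (by exact_mod_cast hα)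
    omega
  obtain ⟨f, hf⟩ : ∃ f, BatonProfile m α f := ⟨_, batonProfile_ceil hα⟩
  have hcard : N * m ^ n < (cube m n).card := by
    have : (N : ℝ) * m ^ n < (m + 1) ^ n := by
      rw [← lt_div_iff₀ (by positivity), ← div_pow, hm_def]
      push_cast
      rwa [add_assoc, one_add_one_eq_two]
    rw [card_cube]
    exact_mod_cast this
  obtain ⟨ν, -, hν⟩ := exists_lt_card_fiber_of_mul_lt_card_of_maps_to (t := univ)
    (f := fun a ↦ c (f ∘ a)) (fun _ _ ↦ mem_univ _) (by simpa using hcard)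
  have hW : ¬ BatonFree m ((cube m n).filter fun a ↦ c (f ∘ a) = ν) := fun hW ↦
    hν.not_ge (card_le_pow_of_batonFree hm (filter_subset _ _) hW)
  simp only [BatonFree, not_forall, not_not, mem_filter] at hW
  obtain ⟨x, ⟨-, hx⟩, y, ⟨hyc, hy⟩, z, ⟨hzc, hz⟩, h⟩ := hW
  exact ⟨f ∘ x, f ∘ y, f ∘ z, hx.trans hy.symm, hy.trans hz.symm,
    hf.dist_comp_of_isBaton (by linarith) hyc hzc h⟩

/-- `χ(ℝ^n_∞; B(1,α)) ≥ ((⌈α⌉+2)/(⌈α⌉+1))^n`: any coloring of `ℝ^n` (max metric)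
with fewer than `((⌈α⌉+2)/(⌈α⌉+1))^n` colors contains a monochromatic isometric
copy of the baton `{0, 1, 1+α}`. -/
theorem stmt_6 (α : ℝ) (hα : 1 < α) (n : ℕ) (hn : 0 < n) (N : ℕ)
    (hN : (N : ℝ) < (((⌈α⌉₊ : ℝ) + 2) / ((⌈α⌉₊ : ℝ) + 1)) ^ n)
    (c : (Fin n → ℝ) → Fin N) :
    ∃ u v w : Fin n → ℝ,
      c u = c v ∧ c v = c w ∧
      dist u v = 1 ∧ dist v w = α ∧ dist u w = α + 1 :=
  stmt_6_general α hα n N hN c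
end

section
/- Let k be a positive integer and α_1,...,α_k positive reals, and let Γ = {γ ≤ α_1+...+α_k : γ = d_1α_1+...+d_kα_k for some nonnegative integers d_i}. Then there exist positive integers p_1,...,p_k and a strictly increasing sequence of reals a_0 < a_1 < ... < a_m with m = p_1+...+p_k such that (i) a_{l+r} ≤ a_l + a_r whenever l, r ≥ 1 and l + r ≤ m, and (ii) for every γ = d_1α_1+...+d_kα_k ∈ Γ one has d_1p_1+...+d_kp_k ≤ m and a_{d_1p_1+...+d_kp_k} = d_1α_1+...+d_kα_k. -/
/-
Choose positive integer weights `p_i` such that, for the finitely many relevant `d`, the integers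
`d·p` are ordered exactly like the reals `d·α`. Such weights exist because the rational vectors
satisfying every ℚ-linear relation among the `α_i` are dense near `α`: a nearby one has the same
sign as `α` on each of finitely many integer vectors, and clearing denominators keeps these signs.

The points `(d·p, d·α)` with `d·α ≤ Σ α` then form a finite increasing graph `P ⊆ ℕ × ℝ` whose
values are separated by some `γ > 0`; the sum of two points of `P` is again in `P` unless its value
exceeds `Σ α`, and then by at least `γ`. Let `a n` be the lower envelope of the lines of slope `ε`
through the points of `P` to the right of `n`. It increases strictly, and once `ε · Σ p < γ` it
passes through every point of `P` and is subadditive.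
-/

open Finset Filter Topology

theorem Set.Finite.exists_pos_add_le_of_lt {s : Set ℝ} (hs : s.Finite) :
    ∃ γ > 0, ∀ x ∈ s, ∀ y ∈ s, x < y → x + γ ≤ y := by
  let t := ((hs.image2 (fun x y ↦ y - x) hs).inter_of_left (Set.Ioi 0)).toFinset
  have ht : ∀ z ∈ insert 1 t, 0 < z := by
    simp only [t, Finset.mem_insert, Set.Finite.mem_toFinset]
    rintro z (rfl | ⟨-, hz⟩)
    exacts [one_pos, hz]
  have hne : (insert 1 t).Nonempty := Finset.insert_nonempty _ _
  refine ⟨(insert 1 t).min' hne, ht _ (Finset.min'_mem _ _), fun x hx y hy hxy ↦ ?_⟩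
  have hyx : y - x ∈ t := by simpa [t] using ⟨⟨x, hx, y, hy, rfl⟩, hxy⟩
  linarith [(insert 1 t).min'_le _ (Finset.mem_insert_of_mem hyx)]

noncomputable def lowerEnvelope (P : Finset (ℕ × ℝ)) (ε : ℝ) (n : ℕ) : ℝ :=
  if h : {x ∈ P | n ≤ x.1}.Nonempty then
    {x ∈ P | n ≤ x.1}.inf' h fun x ↦ x.2 - ε * (x.1 - n)
  else 0

section lowerEnvelope

variable {P : Finset (ℕ × ℝ)} {ε γ S : ℝ} {m n : ℕ} {x : ℕ × ℝ}

theorem lowerEnvelope_le (hx : x ∈ P) (hn : n ≤ x.1) :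
    lowerEnvelope P ε n ≤ x.2 - ε * (x.1 - n) := by
  have h : x ∈ {x ∈ P | n ≤ x.1} := mem_filter.2 ⟨hx, hn⟩
  rw [lowerEnvelope, dif_pos ⟨x, h⟩]
  exact inf'_le _ h

theorem exists_lowerEnvelope_eq (hx : x ∈ P) (hn : n ≤ x.1) :
    ∃ y ∈ P, n ≤ y.1 ∧ lowerEnvelope P ε n = y.2 - ε * (y.1 - n) := by
  have hne : {x ∈ P | n ≤ x.1}.Nonempty := ⟨x, mem_filter.2 ⟨hx, hn⟩⟩
  obtain ⟨y, hy, hyeq⟩ := exists_mem_eq_inf' hne fun x ↦ x.2 - ε * (x.1 - n)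
  obtain ⟨hyP, hyn⟩ := mem_filter.1 hy
  exact ⟨y, hyP, hyn, by rw [lowerEnvelope, dif_pos hne, hyeq]⟩

theorem lowerEnvelope_lt_succ (hε : 0 < ε) (hx : x ∈ P) (hn : n + 1 ≤ x.1) :
    lowerEnvelope P ε n < lowerEnvelope P ε (n + 1) := by
  obtain ⟨y, hyP, hyn, hy⟩ := exists_lowerEnvelope_eq (ε := ε) hx hn
  have := lowerEnvelope_le (ε := ε) hyP (n.le_succ.trans hyn)
  push_cast at hy
  linarith

theorem lowerEnvelope_eq_of_mem (hPm : ∀ x ∈ P, x.1 ≤ m)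
    (hmono : ∀ x ∈ P, ∀ y ∈ P, x.1 ≤ y.1 → x.2 ≤ y.2)
    (hgap : ∀ x ∈ P, ∀ y ∈ P, x.1 < y.1 → x.2 + γ ≤ y.2)
    (hε : 0 ≤ ε) (hεm : ε * m < γ) {x : ℕ × ℝ} (hx : x ∈ P) :
    lowerEnvelope P ε x.1 = x.2 := by
  refine le_antisymm (by simpa using lowerEnvelope_le (ε := ε) hx le_rfl) ?_
  obtain ⟨y, hyP, hxy, hy⟩ := exists_lowerEnvelope_eq (ε := ε) hx le_rfl
  rw [hy]
  rcases hxy.eq_or_lt with hxy | hxy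
  · simpa [hxy] using hmono x hx y hyP hxy.le
  · have hym : (y.1 : ℝ) ≤ m := by exact_mod_cast hPm y hyP
    have hdist : ε * ((y.1 : ℝ) - x.1) ≤ ε * m :=
      mul_le_mul_of_nonneg_left (by linarith [x.1.cast_nonneg (α := ℝ)]) hε
    linarith [hgap x hx y hyP hxy]

theorem lowerEnvelope_add_le (hmS : (m, S) ∈ P) (hPm : ∀ x ∈ P, x.1 ≤ m)
    (hadd : ∀ x ∈ P, ∀ y ∈ P, x + y ∈ P ∨ S + γ ≤ x.2 + y.2)
    (hε : 0 ≤ ε) (hεm : ε * m ≤ γ) {l r : ℕ} (hlr : l + r ≤ m) :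
    lowerEnvelope P ε (l + r) ≤ lowerEnvelope P ε l + lowerEnvelope P ε r := by
  obtain ⟨x, hxP, hlx, hx⟩ := exists_lowerEnvelope_eq (ε := ε) hmS (le_of_add_le_left hlr)
  obtain ⟨y, hyP, hry, hy⟩ := exists_lowerEnvelope_eq (ε := ε) hmS (le_of_add_le_right hlr)
  rw [hx, hy]
  rcases hadd x hxP y hyP with hxy | hxy
  · have := lowerEnvelope_le (ε := ε) hxy (add_le_add hlx hry)
    simp only [Prod.fst_add, Prod.snd_add] at this
    push_cast at this
    linarith
  · have hS := lowerEnvelope_le (ε := ε) hmS hlr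
    have hxm : (x.1 : ℝ) ≤ m := by exact_mod_cast hPm x hxP
    have hym : (y.1 : ℝ) ≤ m := by exact_mod_cast hPm y hyP
    have hdist : ε * ((x.1 : ℝ) + y.1 - m) ≤ ε * m :=
      mul_le_mul_of_nonneg_left (by linarith) hε
    push_cast at hS
    linarith

end lowerEnvelope

theorem exists_subadditive_interpolation (P : Finset (ℕ × ℝ)) (m : ℕ) (S γ : ℝ) (hγ : 0 < γ)
    (hmS : (m, S) ∈ P) (hPS : ∀ x ∈ P, x.2 ≤ S)
    (hlt_iff : ∀ x ∈ P, ∀ y ∈ P, x.1 < y.1 ↔ x.2 < y.2)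
    (hgap : ∀ x ∈ P, ∀ y ∈ P, x.2 < y.2 → x.2 + γ ≤ y.2)
    (hadd : ∀ x ∈ P, ∀ y ∈ P, x + y ∈ P ∨ S + γ ≤ x.2 + y.2) :
    ∃ a : ℕ → ℝ, (∀ l < m, a l < a (l + 1)) ∧ (∀ l r, l + r ≤ m → a (l + r) ≤ a l + a r) ∧
      ∀ x ∈ P, x.1 ≤ m ∧ a x.1 = x.2 := by
  have hle_iff : ∀ x ∈ P, ∀ y ∈ P, x.1 ≤ y.1 ↔ x.2 ≤ y.2 := fun x hx y hy ↦ by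
    simpa only [not_lt] using (hlt_iff y hy x hx).not
  have hPm : ∀ x ∈ P, x.1 ≤ m := fun x hx ↦ (hle_iff x hx _ hmS).2 (hPS x hx)
  have hε : 0 < γ / (m + 1) := by positivity
  have hεm : γ / (m + 1) * m < γ := by
    rw [div_mul_eq_mul_div, div_lt_iff₀ (by positivity)]
    linarith
  refine ⟨lowerEnvelope P (γ / (m + 1)), fun l hl ↦ lowerEnvelope_lt_succ hε hmS hl,
    fun l r hlr ↦ lowerEnvelope_add_le hmS hPm hadd hε.le hεm.le hlr,
    fun x hx ↦ ⟨hPm x hx, lowerEnvelope_eq_of_mem hPm (fun x hx y hy ↦ (hle_iff x hx y hy).1)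
      (fun x hx y hy h ↦ hgap x hx y hy ((hlt_iff x hx y hy).1 h)) hε.le hεm hx⟩⟩

section Weights

variable {ι : Type*} [Fintype ι]

theorem exists_rat_mem_nhds_preserving_relations (α : ι → ℝ) {U : Set (ι → ℝ)} (hU : U ∈ 𝓝 α) :
    ∃ q : ι → ℚ, (fun i ↦ (q i : ℝ)) ∈ U ∧
      ∀ c : ι → ℚ, ∑ i, (c i : ℝ) * α i = 0 → ∑ i, c i * q i = 0 := by
  let W := Submodule.span ℚ (Set.range α)
  have : FiniteDimensional ℚ W := FiniteDimensional.span_of_finite ℚ (Set.finite_range α)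
  let b := Module.finBasis ℚ W
  let αW : ι → W := fun i ↦ ⟨α i, Submodule.subset_span ⟨i, rfl⟩⟩
  let r : ι → Fin (Module.finrank ℚ W) → ℚ := fun i ↦ b.repr (αW i)
  -- `F u` satisfies every ℚ-relation of `α = F b` as soon as `u` is rational.
  let F : (Fin (Module.finrank ℚ W) → ℝ) → ι → ℝ := fun u i ↦ ∑ j, (r i j : ℝ) * u j
  have hF : Continuous F := by fun_prop
  have hFβ : F (fun j ↦ (b j : ℝ)) = α := by
    funext i
    have h := congrArg Subtype.val (b.sum_repr (αW i))
    simp only [Submodule.coe_sum, Submodule.coe_smul, Rat.smul_def] at h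
    exact h
  obtain ⟨_, ⟨u, rfl⟩, hu⟩ := (DenseRange.piMap fun _ ↦ Rat.denseRange_cast).inter_nhds_nonempty
    (hF.continuousAt.preimage_mem_nhds (hFβ ▸ hU))
  refine ⟨fun i ↦ ∑ j, r i j * u j, by simpa [F] using hu, fun c hc ↦ ?_⟩
  have hrel : ∑ i, c i • αW i = 0 := Subtype.ext (by simpa [αW, Rat.smul_def] using hc)
  have hcoord : ∀ j, ∑ i, c i * r i j = 0 := fun j ↦ by
    simpa [r, map_sum, map_smul] using congrArg (fun w ↦ b.repr w j) hrel
  simp only [mul_sum, ← mul_assoc]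
  rw [sum_comm]
  simp [← sum_mul, hcoord]

theorem exists_pos_nat_mul_eq_intCast (q : ι → ℚ) :
    ∃ N : ℕ, 0 < N ∧ ∃ z : ι → ℤ, ∀ i, (N : ℚ) * q i = z i := by
  refine ⟨∏ i, (q i).den, prod_pos fun i _ ↦ (q i).pos, ?_⟩
  choose t ht using fun i ↦ dvd_prod_of_mem (fun j ↦ (q j).den) (mem_univ i)
  refine ⟨fun i ↦ t i * (q i).num, fun i ↦ ?_⟩
  rw [ht i]
  push_cast
  rw [← Rat.mul_den_eq_num]
  ring

theorem exists_int_sign_sum_mul_eq (α : ι → ℝ) (C : Finset (ι → ℤ)) :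
    ∃ p : ι → ℤ, ∀ c ∈ C,
      SignType.sign (∑ i, c i * p i) = SignType.sign (∑ i, (c i : ℝ) * α i) := by
  have hU : ∀ᶠ x in 𝓝 α, ∀ c ∈ C, ∑ i, (c i : ℝ) * α i ≠ 0 →
      SignType.sign (∑ i, (c i : ℝ) * x i) = SignType.sign (∑ i, (c i : ℝ) * α i) := by
    refine (Finset.eventually_all C).2 fun c _ ↦ ?_
    by_cases h0 : ∑ i, (c i : ℝ) * α i = 0
    · exact .of_forall fun _ h ↦ (h h0).elim
    have hcont : ContinuousAt (fun x : ι → ℝ ↦ SignType.sign (∑ i, (c i : ℝ) * x i)) α :=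
      ContinuousAt.comp (f := fun x : ι → ℝ ↦ ∑ i, (c i : ℝ) * x i)
        (continuousAt_sign_of_ne_zero h0) (Continuous.continuousAt (by fun_prop))
    filter_upwards [hcont.eventually_mem ((isOpen_discrete {_}).mem_nhds rfl)] with x hx _
    exact hx
  obtain ⟨q, hqU, hqrel⟩ := exists_rat_mem_nhds_preserving_relations α hU
  obtain ⟨N, hN, p, hp⟩ := exists_pos_nat_mul_eq_intCast q
  refine ⟨p, fun c hc ↦ ?_⟩
  have hsum : ((∑ i, c i * p i : ℤ) : ℚ) = N * ∑ i, (c i : ℚ) * q i := by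
    rw [mul_sum]
    push_cast
    refine sum_congr rfl fun i _ ↦ ?_
    rw [← hp]
    ring
  rw [← sign_intCast (α := ℚ), hsum, sign_mul, sign_pos (by exact_mod_cast hN), one_mul]
  by_cases h0 : ∑ i, (c i : ℝ) * α i = 0
  · rw [h0, hqrel (fun i ↦ c i) (by simpa using h0), sign_zero, sign_zero]
  · rw [← hqU c hc h0, ← StrictMono.sign_comp (f := Rat.castHom ℝ) Rat.cast_strictMono]
    simp

theorem exists_bound_of_sum_mul_le {α : ι → ℝ} (hα : ∀ i, 0 < α i) (S : ℝ) :
    ∃ A : ℕ, ∀ d : ι → ℕ, ∑ i, (d i : ℝ) * α i ≤ S → ∀ i, d i ≤ A := by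
  refine ⟨univ.sup fun i ↦ ⌈S / α i⌉₊, fun d hd i ↦ le_sup_of_le (mem_univ i) ?_⟩
  have hdi : (d i : ℝ) * α i ≤ S :=
    (single_le_sum (fun j _ ↦ mul_nonneg (d j).cast_nonneg (hα j).le) (mem_univ i)).trans hd
  exact Nat.cast_le.1 (((le_div_iff₀ (hα i)).2 hdi).trans (Nat.le_ceil _))

theorem exists_pos_nat_weights_lt_iff {α : ι → ℝ} (hα : ∀ i, 0 < α i) (B : ℕ) :
    ∃ p : ι → ℕ, (∀ i, 0 < p i) ∧ ∀ d e : ι → ℕ, (∀ i, d i ≤ B) → (∀ i, e i ≤ B) →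
      (∑ i, d i * p i < ∑ i, e i * p i ↔ ∑ i, (d i : ℝ) * α i < ∑ i, (e i : ℝ) * α i) := by
  classical
  -- The box has radius `B + 1` so that it also contains the unit vectors.
  let b : ι → ℤ := fun _ ↦ B + 1
  obtain ⟨p, hp⟩ := exists_int_sign_sum_mul_eq α (Icc (-b) b)
  have hpos_iff : ∀ c : ι → ℤ, (∀ i, |c i| ≤ B + 1) →
      (0 < ∑ i, c i * p i ↔ 0 < ∑ i, (c i : ℝ) * α i) := fun c hc ↦ by
    have hcb : c ∈ Icc (-b) b :=
      mem_Icc.2 ⟨fun i ↦ neg_le.1 ((neg_le_abs _).trans (hc i)),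
        fun i ↦ (le_abs_self _).trans (hc i)⟩
    rw [← sign_eq_one_iff, ← sign_eq_one_iff, hp c hcb]
  have hp_pos : ∀ i, 0 < p i := fun i ↦ by
    have hunit : ∀ j, |(Pi.single i 1 : ι → ℤ) j| ≤ B + 1 := fun j ↦ by
      rcases eq_or_ne j i with rfl | h
      · simp
      · simp [h]; positivity
    simpa [Pi.single_apply, hα i] using hpos_iff _ hunit
  lift p to ι → ℕ using fun i ↦ (hp_pos i).le
  refine ⟨p, fun i ↦ by simpa using hp_pos i, fun d e hd he ↦ ?_⟩
  have := hpos_iff (fun i ↦ e i - d i) fun i ↦ by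
    have := hd i
    have := he i
    rw [abs_le]
    omega
  simp only [Int.cast_sub, Int.cast_natCast, sub_mul, sum_sub_distrib, sub_pos] at this
  exact_mod_cast this

theorem exists_subadditive_interpolation_of_weights (α : ι → ℝ) (p : ι → ℕ) {A : ℕ} {γ : ℝ}
    (hγ : 0 < γ) (hA : ∀ d : ι → ℕ, ∑ i, (d i : ℝ) * α i ≤ ∑ i, α i → ∀ i, d i ≤ A)
    (hlt_iff : ∀ d e : ι → ℕ, (∀ i, d i ≤ 2 * A + 1) → (∀ i, e i ≤ 2 * A + 1) →
      (∑ i, d i * p i < ∑ i, e i * p i ↔ ∑ i, (d i : ℝ) * α i < ∑ i, (e i : ℝ) * α i))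
    (hgap : ∀ d e : ι → ℕ, (∀ i, d i ≤ 2 * A + 1) → (∀ i, e i ≤ 2 * A + 1) →
      ∑ i, (d i : ℝ) * α i < ∑ i, (e i : ℝ) * α i →
        ∑ i, (d i : ℝ) * α i + γ ≤ ∑ i, (e i : ℝ) * α i) :
    ∃ a : ℕ → ℝ, (∀ l < ∑ i, p i, a l < a (l + 1)) ∧
      (∀ l r, l + r ≤ ∑ i, p i → a (l + r) ≤ a l + a r) ∧
      ∀ d : ι → ℕ, ∑ i, (d i : ℝ) * α i ≤ ∑ i, α i →
        ∑ i, d i * p i ≤ ∑ i, p i ∧ a (∑ i, d i * p i) = ∑ i, (d i : ℝ) * α i := by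
  classical
  set S := ∑ i, α i
  let D := {d : ι → ℕ | ∑ i, (d i : ℝ) * α i ≤ S}
  -- `2 * A + 1` bounds the entries of `d + e` for `d, e ∈ D`, and of the all-ones vector.
  have hDA : ∀ d ∈ D, ∀ i, d i ≤ 2 * A + 1 := fun d hd i ↦ (hA d hd i).trans (by omega)
  have hD : D.Finite := (Set.finite_Iic fun _ ↦ A).subset hA
  let P := hD.toFinset.image fun d ↦ (∑ i, d i * p i, ∑ i, (d i : ℝ) * α i)
  have hmemP : ∀ d ∈ D, (∑ i, d i * p i, ∑ i, (d i : ℝ) * α i) ∈ P :=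
    fun d hd ↦ mem_image_of_mem _ ((Set.Finite.mem_toFinset _).2 hd)
  have hone : (fun _ ↦ 1 : ι → ℕ) ∈ D := by simp [D, S]
  have hadd : ∀ x ∈ P, ∀ y ∈ P, x + y ∈ P ∨ S + γ ≤ x.2 + y.2 := by
    simp only [P, forall_mem_image, Set.Finite.mem_toFinset]
    intro d hd e he
    by_cases hde : d + e ∈ D
    · left
      rw [Prod.mk_add_mk]
      simpa only [Pi.add_apply, add_mul, Nat.cast_add, sum_add_distrib] using hmemP _ hde
    · right
      have hde_le : ∀ i, (d + e) i ≤ 2 * A + 1 := fun i ↦ by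
        simp only [Pi.add_apply]
        linarith [hA d hd i, hA e he i]
      have hlt : S < ∑ i, ((d + e) i : ℝ) * α i := not_le.1 hde
      simpa [S, add_mul, sum_add_distrib] using
        hgap _ (d + e) (hDA _ hone) hde_le (by simpa [S] using hlt)
  obtain ⟨a, ha_lt, ha_sub, ha_eq⟩ := exists_subadditive_interpolation P (∑ i, p i) S γ hγ
    (by simpa [S] using hmemP _ hone)
    (by simp only [P, forall_mem_image, Set.Finite.mem_toFinset]; exact fun d hd ↦ hd)
    (by simp only [P, forall_mem_image, Set.Finite.mem_toFinset]
        exact fun d hd e he ↦ hlt_iff d e (hDA d hd) (hDA e he))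
    (by simp only [P, forall_mem_image, Set.Finite.mem_toFinset]
        exact fun d hd e he ↦ hgap d e (hDA d hd) (hDA e he))
    hadd
  exact ⟨a, ha_lt, ha_sub, fun d hd ↦ ha_eq _ (hmemP d hd)⟩

theorem exists_subadditive_interpolation_of_pos (α : ι → ℝ) (hα : ∀ i, 0 < α i) :
    ∃ (p : ι → ℕ) (a : ℕ → ℝ), (∀ i, 0 < p i) ∧ (∀ l < ∑ i, p i, a l < a (l + 1)) ∧
      (∀ l r, l + r ≤ ∑ i, p i → a (l + r) ≤ a l + a r) ∧
      ∀ d : ι → ℕ, ∑ i, (d i : ℝ) * α i ≤ ∑ i, α i →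
        ∑ i, d i * p i ≤ ∑ i, p i ∧ a (∑ i, d i * p i) = ∑ i, (d i : ℝ) * α i := by
  classical
  obtain ⟨A, hA⟩ := exists_bound_of_sum_mul_le hα (∑ i, α i)
  obtain ⟨p, hp, hlt_iff⟩ := exists_pos_nat_weights_lt_iff hα (2 * A + 1)
  obtain ⟨γ, hγ, hgap⟩ := ((Set.finite_Iic fun _ : ι ↦ 2 * A + 1).image
    fun d ↦ ∑ i, (d i : ℝ) * α i).exists_pos_add_le_of_lt
  obtain ⟨a, ha⟩ := exists_subadditive_interpolation_of_weights α p hγ hA hlt_iff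
    fun d e hd he ↦ hgap _ ⟨d, hd, rfl⟩ _ ⟨e, he, rfl⟩
  exact ⟨p, a, hp, ha⟩

end Weights

theorem stmt_9_general (k : ℕ) (α : ℕ → ℝ) (hα : ∀ i < k, 0 < α i) :
    ∃ (p : ℕ → ℕ) (a : ℕ → ℝ), (∀ i < k, 0 < p i) ∧
      (∀ l < ∑ i ∈ Finset.range k, p i, a l < a (l + 1)) ∧
      (∀ l r : ℕ, 1 ≤ l → 1 ≤ r → l + r ≤ ∑ i ∈ Finset.range k, p i →
        a (l + r) ≤ a l + a r) ∧
      (∀ d : ℕ → ℕ,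
        (∑ i ∈ Finset.range k, (d i : ℝ) * α i ≤ ∑ i ∈ Finset.range k, α i) →
        (∑ i ∈ Finset.range k, d i * p i ≤ ∑ i ∈ Finset.range k, p i ∧
          a (∑ i ∈ Finset.range k, d i * p i) =
            ∑ i ∈ Finset.range k, (d i : ℝ) * α i)) := by
  obtain ⟨p, a, hp, ha_lt, ha_sub, ha_eq⟩ :=
    exists_subadditive_interpolation_of_pos (fun i : Fin k ↦ α i) fun i ↦ hα i i.isLt
  let p' : ℕ → ℕ := fun n ↦ if h : n < k then p ⟨n, h⟩ else 0
  have hsum : ∀ d : ℕ → ℕ, ∑ i ∈ range k, d i * p' i = ∑ i : Fin k, d i * p i := fun d ↦ by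
    simp [sum_range, p']
  have hsum_one : ∑ i ∈ range k, p' i = ∑ i, p i := by simpa using hsum 1
  refine ⟨p', a, fun i hi ↦ by simpa [p', hi] using hp ⟨i, hi⟩, hsum_one ▸ ha_lt,
    fun l r _ _ ↦ hsum_one ▸ ha_sub l r, fun d hd ↦ ?_⟩
  rw [hsum, hsum_one]
  simp only [sum_range] at hd ⊢
  exact ha_eq (fun i ↦ d i) hd

/-- Lemma on the approximating sequence: there are positive integers `p_1, …, p_k`
and reals `a_0 < ⋯ < a_m` with `m = p_1 + ⋯ + p_k` that are subadditive and
interpolate the nonnegative integer combinations `γ = d_1α_1 + ⋯ + d_kα_k ≤ α_1 + ⋯ + α_k`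
at the indices `d_1p_1 + ⋯ + d_kp_k`. -/
theorem stmt_9 (k : ℕ) (hk : 0 < k) (α : ℕ → ℝ) (hα : ∀ i < k, 0 < α i) :
    ∃ (p : ℕ → ℕ) (a : ℕ → ℝ), (∀ i < k, 0 < p i) ∧
      (∀ l < ∑ i ∈ Finset.range k, p i, a l < a (l + 1)) ∧
      (∀ l r : ℕ, 1 ≤ l → 1 ≤ r → l + r ≤ ∑ i ∈ Finset.range k, p i →
        a (l + r) ≤ a l + a r) ∧
      (∀ d : ℕ → ℕ,
        (∑ i ∈ Finset.range k, (d i : ℝ) * α i ≤ ∑ i ∈ Finset.range k, α i) →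
        (∑ i ∈ Finset.range k, d i * p i ≤ ∑ i ∈ Finset.range k, p i ∧
          a (∑ i ∈ Finset.range k, d i * p i) =
            ∑ i ∈ Finset.range k, (d i : ℝ) * α i)) :=
  stmt_9_general k α hα
end

section
/- (Dirichlet's simultaneous approximation theorem) For all real numbers α_1, ..., α_k and every positive integer q_0, there exist an integer q > q_0 and integers p_1, ..., p_k such that |α_i - p_i/q| < 1/q^{1+1/k} for every 1 ≤ i ≤ k. -/
/-!
Pigeonhole: the `N ^ k + 1` points `(fract (m * α i))ᵢ`, `0 ≤ m ≤ N ^ k`, lie in the `N ^ k` cells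
of mesh `1 / N` of `[0, 1) ^ k`, and the difference `q ≤ N ^ k` of two indices in the same cell
satisfies `|q * α i - p i| < 1 / N`, hence `|α i - p i / q| < 1 / (q * N) ≤ 1 / q ^ (1 + 1 / k)`.
To force `q > q₀`: if some `α j` is irrational, the distances from `n * α j` to `ℤ` for
`0 < n ≤ q₀` are positive, and taking `1 / N` below all of them rules out `q ≤ q₀`; if every
`α i` is rational, a large multiple of a common denominator approximates them exactly.
-/

open Filter Finset Int

lemma abs_sub_sub_floor_sub_lt_of_floor_fract_mul_eq {x y : ℝ} {N : ℕ} (hN : 0 < N)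
    (h : ⌊fract x * N⌋₊ = ⌊fract y * N⌋₊) :
    |x - y - ((⌊x⌋ - ⌊y⌋ : ℤ) : ℝ)| < 1 / N := by
  have hNR : (0 : ℝ) < N := by exact_mod_cast hN
  have hfloor : ⌊fract x * N⌋ = ⌊fract y * N⌋ := by
    rw [← natCast_floor_eq_floor (by positivity), h, natCast_floor_eq_floor (by positivity)]
  calc |x - y - ((⌊x⌋ - ⌊y⌋ : ℤ) : ℝ)| = |fract x * N - fract y * N| / N := by
        rw [← sub_mul, abs_mul, abs_of_pos hNR, mul_div_cancel_right₀ _ hNR.ne', fract, fract]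
        push_cast
        congr 1
        ring
    _ < 1 / N := div_lt_div_of_pos_right (abs_sub_lt_one_of_floor_eq_floor hfloor) hNR

theorem exists_nat_pos_le_pow_card_abs_mul_sub_lt {ι : Type*} [Fintype ι] (α : ι → ℝ)
    {N : ℕ} (hN : 0 < N) :
    ∃ q : ℕ, 0 < q ∧ q ≤ N ^ Fintype.card ι ∧
      ∃ p : ι → ℤ, ∀ i, |q * α i - p i| < 1 / N := by
  classical
  have hNR : (0 : ℝ) < N := by exact_mod_cast hN
  let cell : Fin (N ^ Fintype.card ι + 1) → ι → Fin N := fun m i =>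
    ⟨⌊fract (m * α i) * N⌋₊, (Nat.floor_lt (by positivity)).2 <|
      mul_lt_of_lt_one_left hNR (fract_lt_one _)⟩
  obtain ⟨a, b, hab, hcell⟩ : ∃ a b, a < b ∧ cell a = cell b := by
    obtain ⟨a, b, hne, heq⟩ := Fintype.exists_ne_map_eq_of_card_lt cell (by simp)
    rcases hne.lt_or_gt with h | h
    exacts [⟨a, b, h, heq⟩, ⟨b, a, h, heq.symm⟩]
  refine ⟨b - a, by omega, by omega, fun i => ⌊(b : ℝ) * α i⌋ - ⌊(a : ℝ) * α i⌋, fun i => ?_⟩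
  have hsame : ⌊fract (b * α i) * N⌋₊ = ⌊fract (a * α i) * N⌋₊ :=
    congrArg Fin.val (congrFun hcell i).symm
  convert abs_sub_sub_floor_sub_lt_of_floor_fract_mul_eq hN hsame using 3
  push_cast [Nat.cast_sub (Fin.le_iff_val_le_val.1 hab.le)]
  ring

lemma Irrational.exists_nat_forall_one_div_le_abs_mul_sub {x : ℝ} (hx : Irrational x) (q₀ : ℕ) :
    ∃ N : ℕ, 0 < N ∧ ∀ n : ℕ, 0 < n → n ≤ q₀ → ∀ p : ℤ, 1 / (N : ℝ) ≤ |n * x - p| := by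
  have hpos : ∀ n ∈ Icc 1 q₀, 0 < |n * x - round (n * x)| := fun n hn =>
    abs_pos.2 <| sub_ne_zero.2 <| (hx.natCast_mul (by simp at hn; omega)).ne_int _
  obtain ⟨N, hN, hlt⟩ : ∃ N : ℕ, 0 < N ∧
      ∀ n ∈ Icc 1 q₀, 1 / (N : ℝ) < |n * x - round (n * x)| :=
    ((eventually_gt_atTop 0).and <| (eventually_all_finset _).2 fun n hn =>
      tendsto_one_div_atTop_nhds_zero_nat.eventually (gt_mem_nhds (hpos n hn))).exists
  exact ⟨N, hN, fun n hn hnq p => (hlt n (mem_Icc.2 ⟨hn, hnq⟩)).le.trans (round_le _ p)⟩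

lemma exists_nat_gt_forall_mul_eq_int {ι : Type*} [Fintype ι] (r : ι → ℚ) (q₀ : ℕ) :
    ∃ q : ℕ, q₀ < q ∧ ∀ i, ∃ p : ℤ, (q : ℚ) * r i = p := by
  refine ⟨(q₀ + 1) * ∏ i, (r i).den, ?_, fun i => ?_⟩
  · have : 0 < ∏ i, (r i).den := prod_pos fun i _ => (r i).pos
    nlinarith
  · obtain ⟨c, hc⟩ := (dvd_prod_of_mem (fun i => (r i).den) (mem_univ i)).mul_left (q₀ + 1)
    refine ⟨c * (r i).num, ?_⟩
    rw [hc]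
    push_cast
    rw [← Rat.mul_den_eq_num]
    ring

lemma abs_sub_div_lt_one_div_rpow {k q N : ℕ} (hk : k ≠ 0) (hq : 0 < q) (hqN : q ≤ N ^ k)
    {a : ℝ} {p : ℤ} (h : |q * a - p| < 1 / N) :
    |a - p / q| < 1 / (q : ℝ) ^ ((1 : ℝ) + 1 / k) := by
  have hqR : (0 : ℝ) < q := by exact_mod_cast hq
  have hroot : (q : ℝ) ^ (1 / k : ℝ) ≤ N := by
    calc (q : ℝ) ^ (1 / k : ℝ) ≤ ((N : ℝ) ^ k) ^ ((k : ℝ)⁻¹) := by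
          rw [one_div]; gcongr; exact_mod_cast hqN
      _ = N := Real.pow_rpow_inv_natCast N.cast_nonneg hk
  have hNR : (0 : ℝ) < N := (Real.rpow_pos_of_pos hqR _).trans_le hroot
  calc |a - p / q| = |q * a - p| / q := by
        rw [← abs_of_pos hqR, ← abs_div, abs_of_pos hqR, sub_div, mul_div_cancel_left₀ _ hqR.ne']
    _ < 1 / N / q := div_lt_div_of_pos_right h hqR
    _ = 1 / (q * N) := by rw [div_div, mul_comm]
    _ ≤ 1 / (q : ℝ) ^ ((1 : ℝ) + 1 / k) := by
        rw [Real.rpow_add hqR, Real.rpow_one]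
        gcongr

theorem stmt_10_general (k : ℕ) (α : Fin k → ℝ) (q₀ : ℕ) :
    ∃ q : ℕ, q₀ < q ∧ ∃ p : Fin k → ℤ,
      ∀ i : Fin k, |α i - (p i : ℝ) / (q : ℝ)| < 1 / (q : ℝ) ^ ((1 : ℝ) + 1 / k) := by
  by_cases hirr : ∃ j, Irrational (α j)
  · obtain ⟨j, hj⟩ := hirr
    obtain ⟨N, hN, hfar⟩ := hj.exists_nat_forall_one_div_le_abs_mul_sub q₀
    obtain ⟨q, hq, hqN, p, hp⟩ := exists_nat_pos_le_pow_card_abs_mul_sub_lt α hN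
    rw [Fintype.card_fin] at hqN
    have hq₀ : q₀ < q := by
      by_contra! hle
      exact (hfar q hq hle (p j)).not_gt (hp j)
    exact ⟨q, hq₀, p, fun i => abs_sub_div_lt_one_div_rpow j.pos.ne' hq hqN (hp i)⟩
  · have hrat : ∀ i, α i ∈ Set.range ((↑) : ℚ → ℝ) := fun i => not_not.1 (not_exists.1 hirr i)
    choose r hr using hrat
    obtain ⟨q, hq₀, hint⟩ := exists_nat_gt_forall_mul_eq_int r q₀
    choose p hp using hint
    refine ⟨q, hq₀, p, fun i => ?_⟩
    have hqR : (0 : ℝ) < q := by exact_mod_cast q₀.zero_le.trans_lt hq₀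
    have hexact : α i = p i / q := by
      rw [eq_div_iff hqR.ne', ← hr i, mul_comm]
      exact_mod_cast hp i
    rw [hexact, sub_self, abs_zero]
    positivity

/-- Dirichlet's simultaneous approximation theorem: for reals `α_1, …, α_k` and
any `q₀`, there is an integer `q > q₀` and integers `p_i` with
`|α_i - p_i/q| < 1/q^{1+1/k}` for all `i`. -/
theorem stmt_10 (k : ℕ) (hk : 0 < k) (α : Fin k → ℝ) (q₀ : ℕ) (hq₀ : 0 < q₀) :
    ∃ q : ℕ, q₀ < q ∧ ∃ p : Fin k → ℤ,
      ∀ i : Fin k, |α i - (p i : ℝ) / (q : ℝ)| < 1 / (q : ℝ) ^ ((1 : ℝ) + 1 / k) :=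
  stmt_10_general k α q₀
end

section
/- Every finite metric space with at least two points is exponentially ℓ∞-Ramsey: for every finite metric space M with |M| ≥ 2 there exists a constant χ_M > 1 such that χ(R^n_∞; M) ≥ (χ_M + o(1))^n as n → ∞. -/
/-!
Let `r` be the smallest nonzero distance in `M`. Through `p ↦ (dist p z)_z`, `M` sits
isometrically in a finite grid `G ⊂ ℝ^M` (sup metric) in which every point is joined to `0` by
steps of length at most `r`. A set `T ⊆ G^q` with no isometric copy of `M` has at most
`(|G| - 1)^q` points: slice `T` along the first coordinate. The slices over `r`-close points of
`G` can be merged at no cost, since first coordinates within `r` of each other are invisible to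
the max metric on a copy of `M`; and the slices over all of `G` have no common point, which
would extend the copy of `M` in `G` to one in `T`. Hence an `N`-colouring of
`G^q ⊆ ℝ^(q |M|)` with `N < (|G| / (|G| - 1))^q` has a monochromatic copy of `M`, and
`χ_M = (|G| / (|G| - 1))^(1/|M|)` works.
-/

open Finset Filter Topology

namespace Finset

variable {α β γ : Type*}

/-- The potential `ψ` certifies that `S` is `R`-connected towards the root `g₀`. -/
def Descends [LinearOrder γ] (S : Finset β) (R : β → β → Prop) (ψ : β → γ) (g₀ : β) : Prop :=
  ∀ x ∈ S, x ≠ g₀ → ∃ y ∈ S, ψ y < ψ x ∧ R x y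

theorem sum_card_le_of_descends [DecidableEq α] [DecidableEq β] [LinearOrder γ]
    (T : β → Finset α) {R : β → β → Prop} {ψ : β → γ} {g₀ : β} {B : ℕ} (S : Finset β)
    (hS : S.Nonempty) (hdesc : S.Descends R ψ g₀)
    (hB : ∀ x ∈ S, ∀ y ∈ S, R x y → ∀ I ⊆ T y, #(I ∪ T x) ≤ B) :
    ∑ a ∈ S, #(T a) ≤ (#S - 1) * B + #(S.inf' hS T) := by
  -- Remove a non-root point `g` of maximal potential and merge its set with the common part of
  -- the others, using the bound `B` at an `R`-neighbour of `g`.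
  induction S using Finset.strongInduction with
  | H S ih =>
  rcases hS.exists_eq_singleton_or_nontrivial with ⟨a, rfl⟩ | hS₂
  · simp
  obtain ⟨g, hg, hg_max⟩ := exists_max_image (S.erase g₀) ψ hS₂.erase_nonempty
  obtain ⟨hgg₀, hgS⟩ := mem_erase.1 hg
  obtain ⟨y, hyS, hψy, hRy⟩ := hdesc g hgS hgg₀
  have hyS' : y ∈ S.erase g := mem_erase.2 ⟨by rintro rfl; exact hψy.false, hyS⟩
  have hdesc' : (S.erase g).Descends R ψ g₀ := by
    intro x hx hx₀
    obtain ⟨z, hzS, hψz, hRz⟩ := hdesc x (mem_of_mem_erase hx) hx₀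
    refine ⟨z, mem_erase.2 ⟨?_, hzS⟩, hψz, hRz⟩
    rintro rfl
    exact (hg_max x (mem_erase.2 ⟨hx₀, mem_of_mem_erase hx⟩)).not_gt hψz
  have ih' := ih _ (erase_ssubset hgS) ⟨y, hyS'⟩ hdesc'
    fun x hx y hy => hB x (mem_of_mem_erase hx) y (mem_of_mem_erase hy)
  set J := (S.erase g).inf' ⟨y, hyS'⟩ T
  have hJ : #(J ∪ T g) ≤ B := hB g hgS y hyS hRy J (inf'_le T hyS')
  have hJg : J ∩ T g = S.inf' hS T := by
    rw [inter_comm, ← inf_eq_inter, ← inf'_insert ⟨y, hyS'⟩ T]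
    exact inf'_congr _ (insert_erase hgS) fun _ _ => rfl
  have hcard : (#(S.erase g) - 1) * B + B = (#S - 1) * B := by
    rw [← card_erase_add_one hgS, Nat.add_sub_cancel, ← Nat.succ_mul, Nat.succ_eq_add_one,
      Nat.sub_add_cancel (card_pos.2 ⟨y, hyS'⟩)]
  calc ∑ a ∈ S, #(T a) = ∑ a ∈ S.erase g, #(T a) + #(T g) := (sum_erase_add _ _ hgS).symm
    _ ≤ (#(S.erase g) - 1) * B + (#J + #(T g)) := by rw [← add_assoc]; gcongr
    _ = (#(S.erase g) - 1) * B + (#(J ∪ T g) + #(S.inf' hS T)) := by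
      rw [← hJg, card_union_add_card_inter]
    _ ≤ (#S - 1) * B + #(S.inf' hS T) := by rw [← hcard]; omega

theorem card_eq_sum_card_preimage_prodMk {X : Type*} [DecidableEq β] {T : Finset (β × X)}
    {G : Finset β} (hT : ∀ z ∈ T, z.1 ∈ G) :
    #T = ∑ a ∈ G, #(T.preimage (Prod.mk a) (Prod.mk_right_injective a).injOn) := by
  rw [card_eq_sum_card_fiberwise hT]
  refine sum_congr rfl fun a _ => card_nbij' Prod.snd (Prod.mk a) ?_ ?_ ?_ ?_
  · rintro ⟨a', b⟩ hz
    obtain ⟨hz, rfl⟩ := mem_filter.1 hz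
    simpa using hz
  · intro b hb
    simp_all
  · rintro ⟨a', b⟩ hz
    simp_all
  · intro b _
    rfl

end Finset

section IsometricCopy

variable (M : Type*) [PseudoMetricSpace M] {X Y : Type*} [PseudoMetricSpace X] [PseudoMetricSpace Y]

def HasIsometricCopy (S : Set X) : Prop :=
  ∃ f : M → X, Isometry f ∧ ∀ p, f p ∈ S

variable {M}

theorem HasIsometricCopy.map {S : Set X} {S' : Set Y} {g : X → Y} (h : HasIsometricCopy M S)
    (hg : Isometry g) (hS : Set.MapsTo g S S') : HasIsometricCopy M S' :=
  let ⟨f, hf, hfS⟩ := h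
  ⟨g ∘ f, hg.comp hf, fun p => hS (hfS p)⟩

variable {β : Type*} [PseudoMetricSpace β]

theorem HasIsometricCopy.of_union_preimage_prodMk {r : ℝ} (hr : ∀ p q : M, p ≠ q → r ≤ dist p q)
    {T : Set (β × X)} {I : Set X} {a b : β} (hab : dist a b ≤ r) (hI : I ⊆ Prod.mk a ⁻¹' T)
    (h : HasIsometricCopy M (I ∪ Prod.mk b ⁻¹' T)) : HasIsometricCopy M T := by
  classical
  obtain ⟨f, hf, hfT⟩ := h
  refine ⟨fun p => (if f p ∈ I then a else b, f p), Isometry.of_dist_eq fun p q => ?_, fun p => ?_⟩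
  · rw [Prod.dist_eq, hf.dist_eq, max_eq_right_iff]
    rcases eq_or_ne p q with rfl | hpq
    · simp
    · refine le_trans ?_ (hr p q hpq)
      split_ifs <;> simp [hab, dist_comm b a, dist_nonneg.trans hab]
  · dsimp only
    split_ifs with hp
    · exact hI hp
    · exact (hfT p).resolve_left hp

end IsometricCopy

def Fin.consIsometryEquiv (β : Type*) [PseudoMetricSpace β] (n : ℕ) :
    β × (Fin n → β) ≃ᵢ (Fin (n + 1) → β) where
  toEquiv := Fin.consEquiv fun _ => β
  isometry_toFun := Isometry.of_dist_eq fun x y => by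
    simpa [Fin.consEquiv, Fin.insertNth_zero', Prod.dist_eq] using
      Fin.dist_insertNth_insertNth (α := fun _ => β) 0 x.1 y.1 x.2 y.2

section GridBound

variable {M β X γ : Type*} [PseudoMetricSpace M] [PseudoMetricSpace β] [PseudoMetricSpace X]
  [DecidableEq β] [DecidableEq X] [LinearOrder γ] {G : Finset β} {r : ℝ} {ψ : β → γ} {g₀ : β}
  {F : M → β}

theorem card_le_of_not_hasIsometricCopy_prod (hG : G.Descends (fun x y => dist x y ≤ r) ψ g₀)
    (hF : Isometry F) (hFG : ∀ p, F p ∈ G) (hr : ∀ p q : M, p ≠ q → r ≤ dist p q)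
    {U : Finset X} {B : ℕ} (hB : ∀ V ⊆ U, ¬HasIsometricCopy M (V : Set X) → #V ≤ B)
    {T : Finset (β × X)} (hT : T ⊆ G ×ˢ U) (hTM : ¬HasIsometricCopy M (T : Set (β × X))) :
    #T ≤ (#G - 1) * B := by
  rcases G.eq_empty_or_nonempty with rfl | hG₀
  · simp [subset_empty.1 (by simpa using hT)]
  set slice : β → Finset X := fun a => T.preimage (Prod.mk a) (Prod.mk_right_injective a).injOn
  have hslice : ∀ a, slice a ⊆ U := fun a z hz => (mem_product.1 (hT (mem_preimage.1 hz))).2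
  have hstep : ∀ x ∈ G, ∀ y ∈ G, dist x y ≤ r → ∀ I ⊆ slice y, #(I ∪ slice x) ≤ B := by
    intro x _ y _ hxy I hI
    refine hB _ (union_subset (hI.trans (hslice y)) (hslice x)) fun h => hTM ?_
    refine HasIsometricCopy.of_union_preimage_prodMk (I := I) hr (dist_comm x y ▸ hxy) ?_ ?_
    · simpa [slice, ← coe_subset] using hI
    · simpa [slice] using h
  have hempty : G.inf' hG₀ slice = ∅ := by
    refine eq_empty_of_forall_notMem fun z hz => hTM ⟨fun p => (F p, z), ?_, fun p => ?_⟩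
    · exact Isometry.of_dist_eq fun p q => by simp [Prod.dist_eq, hF.dist_eq]
    · exact mem_preimage.1 (inf'_le slice (hFG p) hz)
  calc #T = ∑ a ∈ G, #(slice a) :=
        card_eq_sum_card_preimage_prodMk fun z hz => (mem_product.1 (hT hz)).1
    _ ≤ (#G - 1) * B + #(G.inf' hG₀ slice) := sum_card_le_of_descends slice G hG₀ hG hstep
    _ = (#G - 1) * B := by rw [hempty, card_empty, add_zero]

theorem card_le_of_not_hasIsometricCopy_pi (hG : G.Descends (fun x y => dist x y ≤ r) ψ g₀)
    (hF : Isometry F) (hFG : ∀ p, F p ∈ G) (hr : ∀ p q : M, p ≠ q → r ≤ dist p q) :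
    ∀ (n : ℕ) {T : Finset (Fin n → β)}, T ⊆ Fintype.piFinset (fun _ => G) →
      ¬HasIsometricCopy M (T : Set (Fin n → β)) → #T ≤ (#G - 1) ^ n
  | 0, T, _, _ => (card_le_one_of_subsingleton T).trans (by simp)
  | n + 1, T, hT, hTM => by
    let e := Fin.consIsometryEquiv β n
    rw [← card_image_of_injective T e.symm.injective, pow_succ']
    refine card_le_of_not_hasIsometricCopy_prod hG hF hFG hr
      (fun V hV hVM => card_le_of_not_hasIsometricCopy_pi hG hF hFG hr n hV hVM) ?_ ?_
    · intro z hz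
      obtain ⟨x, hx, rfl⟩ := mem_image.1 hz
      have hxG := Fintype.mem_piFinset.1 (hT hx)
      exact mem_product.2 ⟨hxG 0, Fintype.mem_piFinset.2 fun i => hxG i.succ⟩
    · refine fun h => hTM (h.map e.isometry ?_)
      intro z hz
      obtain ⟨x, hx, rfl⟩ := mem_image.1 hz
      simpa using hx

theorem exists_monochromatic_isometry_of_mul_pow_lt
    (hG : G.Descends (fun x y => dist x y ≤ r) ψ g₀) (hF : Isometry F) (hFG : ∀ p, F p ∈ G)
    (hr : ∀ p q : M, p ≠ q → r ≤ dist p q) {q N : ℕ} (hN : N * (#G - 1) ^ q < #G ^ q)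
    (c : (Fin q → β) → Fin N) : ∃ f : M → (Fin q → β), Isometry f ∧ ∀ x y, c (f x) = c (f y) := by
  obtain ⟨ν, -, hν⟩ := exists_lt_card_fiber_of_mul_lt_card_of_maps_to
    (s := Fintype.piFinset fun _ : Fin q => G) (t := univ) (f := c) (fun _ _ => mem_univ _)
    (by simpa [Fintype.card_piFinset_const] using hN)
  by_contra hno
  refine hν.not_ge (card_le_of_not_hasIsometricCopy_pi hG hF hFG hr q (filter_subset _ _) ?_)
  rintro ⟨f, hf, hfT⟩
  exact hno ⟨f, hf, fun x y => (mem_filter.1 (hfT x)).2.trans (mem_filter.1 (hfT y)).2.symm⟩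

end GridBound

theorem exists_finset_superset_descends (D : Finset ℝ) (hD : ∀ d ∈ D, 0 ≤ d) {r : ℝ}
    (hr : 0 < r) : ∃ A : Finset ℝ, D ⊆ A ∧ A.Descends (fun a b => a - b ≤ r) id 0 := by
  obtain ⟨s, hs⟩ : ∃ s : ℕ, ∀ d ∈ D, d ≤ s * r := by
    obtain ⟨u, hu⟩ := D.bddAbove
    obtain ⟨s, hs⟩ := exists_nat_ge (u / r)
    exact ⟨s, fun d hd => (hu hd).trans ((div_le_iff₀ hr).1 hs)⟩
  refine ⟨D ∪ (range (s + 1)).image fun k : ℕ => (k : ℝ) * r, subset_union_left, fun a ha ha₀ => ?_⟩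
  have ha' : 0 ≤ a ∧ a ≤ s * r := by
    rcases mem_union.1 ha with ha | ha
    · exact ⟨hD a ha, hs a ha⟩
    · obtain ⟨k, hk, rfl⟩ := mem_image.1 ha
      have hks : (k : ℝ) ≤ s := by exact_mod_cast Nat.lt_succ_iff.1 (mem_range.1 hk)
      exact ⟨by positivity, by gcongr⟩
  have hpos : 0 < a := lt_of_le_of_ne ha'.1 (Ne.symm ha₀)
  obtain ⟨k, hk⟩ := Nat.exists_eq_add_one_of_ne_zero (Nat.ceil_pos.2 (div_pos hpos hr)).ne'
  have hlt : k * r < a := (lt_div_iff₀ hr).1 (Nat.lt_ceil.1 (hk ▸ k.lt_succ_self))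
  have hle : a ≤ (k + 1) * r := (div_le_iff₀ hr).1 (by exact_mod_cast hk ▸ Nat.le_ceil (a / r))
  have hks : k < s + 1 := by
    have : (k : ℝ) < s := lt_of_mul_lt_mul_right (hlt.trans_le ha'.2) hr.le
    exact_mod_cast this.trans (lt_add_one _)
  exact ⟨k * r, mem_union_right _ (mem_image.2 ⟨k, mem_range.2 hks, rfl⟩), hlt, by linarith⟩

theorem Finset.Descends.piFinset {ι : Type*} [Fintype ι] [DecidableEq ι] {A : Finset ℝ} {r : ℝ}
    (hr : 0 ≤ r) (hA : A.Descends (fun a b => a - b ≤ r) id 0) :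
    (Fintype.piFinset fun _ : ι => A).Descends (fun x y => dist x y ≤ r) (fun x => ∑ i, x i) 0 := by
  intro x hx hx₀
  obtain ⟨i, hi⟩ := Function.ne_iff.1 hx₀
  rw [Fintype.mem_piFinset] at hx
  obtain ⟨b, hb, hbx, hxb⟩ := hA (x i) (hx i) hi
  simp only [id] at hbx
  refine ⟨Function.update x i b, Fintype.mem_piFinset.2 fun j => ?_, ?_, ?_⟩
  · rcases eq_or_ne j i with rfl | hj <;> simp [*]
  · refine sum_lt_sum (fun j _ => ?_) ⟨i, mem_univ _, by simpa using hbx⟩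
    rcases eq_or_ne j i with rfl | hj
    · simpa using hbx.le
    · simp [hj]
  · refine (dist_pi_le_iff hr).2 fun j => ?_
    rcases eq_or_ne j i with rfl | hj
    · rwa [Function.update_self, Real.dist_eq, abs_of_pos (sub_pos.2 hbx)]
    · simpa [hj] using hr

theorem isometry_dist_pi (M : Type*) [PseudoMetricSpace M] [Fintype M] :
    Isometry fun p : M => fun z : M => dist p z :=
  Isometry.of_dist_eq fun p q => le_antisymm
    ((dist_pi_le_iff dist_nonneg).2 fun z => abs_dist_sub_le p q z)
    (by simpa [Real.dist_eq] using dist_le_pi_dist (fun z => dist p z) (fun z => dist q z) q)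

theorem exists_pos_forall_le_dist (M : Type*) [MetricSpace M] [Finite M] :
    ∃ r > 0, ∀ p q : M, p ≠ q → r ≤ dist p q := by
  rcases ({pq : M × M | pq.1 ≠ pq.2}).eq_empty_or_nonempty with h | h
  · exact ⟨1, one_pos, fun p q hpq => (Set.eq_empty_iff_forall_notMem.1 h (p, q) hpq).elim⟩
  · obtain ⟨a, ha, hmin⟩ := Set.exists_min_image _ (fun pq : M × M => dist pq.1 pq.2)
      (Set.toFinite _) h
    exact ⟨_, dist_pos.2 ha, fun p q hpq => hmin (p, q) hpq⟩

theorem exists_two_le_monochromatic_isometry_of_mul_pow_lt (M : Type*) [MetricSpace M] [Fintype M]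
    (hM : 2 ≤ Fintype.card M) :
    ∃ g : ℕ, 2 ≤ g ∧ ∀ q N : ℕ, N * (g - 1) ^ q < g ^ q → ∀ c : (Fin q → M → ℝ) → Fin N,
      ∃ f : M → (Fin q → M → ℝ), Isometry f ∧ ∀ x y, c (f x) = c (f y) := by
  classical
  obtain ⟨r, hr, hrM⟩ := exists_pos_forall_le_dist M
  obtain ⟨A, hDA, hA⟩ := exists_finset_superset_descends
    ((univ : Finset (M × M)).image fun pq => dist pq.1 pq.2)
    (forall_mem_image.2 fun _ _ => dist_nonneg) hr
  set G := Fintype.piFinset fun _ : M => A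
  have hFG : ∀ p, (fun z => dist p z) ∈ G := fun p =>
    Fintype.mem_piFinset.2 fun z => hDA (mem_image.2 ⟨(p, z), mem_univ _, rfl⟩)
  refine ⟨#G, ?_, fun q N hN c => exists_monochromatic_isometry_of_mul_pow_lt
    (hA.piFinset hr.le) (isometry_dist_pi M) hFG hrM hN c⟩
  calc 2 ≤ Fintype.card M := hM
    _ = #(univ.image fun p : M => fun z => dist p z) :=
      (card_image_of_injective _ (isometry_dist_pi M).injective).symm
    _ ≤ #G := card_le_card (image_subset_iff.2 fun p _ => hFG p)

theorem isometry_uncurry {ι κ α : Type*} [Fintype ι] [Fintype κ] [PseudoEMetricSpace α] :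
    Isometry (Function.uncurry : (ι → κ → α) → ι × κ → α) := fun x y => by
  simp [edist_pi_def, Finset.sup_univ_eq_iSup, iSup_prod]

theorem exists_isometry_pi_fin {ι α : Type*} [Fintype ι] [PseudoMetricSpace α] [Zero α] {n : ℕ}
    (h : Fintype.card ι ≤ n) : ∃ Φ : (ι → α) → (Fin n → α), Isometry Φ := by
  let e : (ι → α) ≃ᵢ (Fin (Fintype.card ι) → α) :=
    IsometryEquiv.piCongrLeft (Y := fun _ => α) (Fintype.equivFin ι).symm |>.symm
  refine ⟨fun x => Fin.appendIsometryOfEq (Nat.add_sub_cancel' h) (e x, 0), ?_⟩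
  have hpair : Isometry fun y : Fin (Fintype.card ι) → α =>
      (y, (0 : Fin (n - Fintype.card ι) → α)) :=
    Isometry.of_dist_eq fun x y => by simp [Prod.dist_eq]
  exact (Fin.appendIsometryOfEq _).isometry.comp (hpair.comp e.isometry)

theorem exists_one_lt_tendsto_pow_le (a : ℝ) (ha : 1 < a) {m : ℕ} (hm : 0 < m) :
    ∃ χ : ℝ, 1 < χ ∧ ∃ δ : ℕ → ℝ, Tendsto δ atTop (𝓝 0) ∧ ∀ n : ℕ, (χ + δ n) ^ n ≤ a ^ (n / m) := by
  have ha₀ : 0 < a := one_pos.trans ha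
  refine ⟨a ^ (m : ℝ)⁻¹, Real.one_lt_rpow ha (by positivity),
    fun n => a ^ ((m : ℝ)⁻¹ - (n : ℝ)⁻¹) - a ^ (m : ℝ)⁻¹, ?_, fun n => ?_⟩
  · have hexp : Tendsto (fun n : ℕ => (m : ℝ)⁻¹ - (n : ℝ)⁻¹) atTop (𝓝 (m : ℝ)⁻¹) := by
      simpa using tendsto_const_nhds.sub (tendsto_inv_atTop_nhds_zero_nat (𝕜 := ℝ))
    simpa using ((Real.continuousAt_const_rpow ha₀.ne').tendsto.comp hexp).sub_const
      (a ^ (m : ℝ)⁻¹)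
  · rw [add_sub_cancel, ← Real.rpow_natCast, ← Real.rpow_mul ha₀.le, ← Real.rpow_natCast a,
      ← Nat.floor_div_eq_div (K := ℝ)]
    refine Real.rpow_le_rpow_of_exponent_le ha.le ?_
    rcases n.eq_zero_or_pos with rfl | hn
    · simp
    have hfloor := Nat.sub_one_lt_floor ((n : ℝ) / m)
    have : ((m : ℝ)⁻¹ - (n : ℝ)⁻¹) * n = n / m - 1 := by field_simp
    linarith

/-- Main theorem: every finite metric space `M` with at least two points is
exponentially `ℓ∞`-Ramsey: there are `χ_M > 1` and `δ(n) → 0` such that any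
coloring of `ℝ^n` (Chebyshev metric) with fewer than `(χ_M + δ n)^n` colors
contains a monochromatic isometric copy of `M`. -/
theorem stmt_13 (M : Type*) [MetricSpace M] [Fintype M]
    (hM : 2 ≤ Fintype.card M) :
    ∃ χ : ℝ, 1 < χ ∧ ∃ δ : ℕ → ℝ,
      Filter.Tendsto δ Filter.atTop (nhds 0) ∧
      ∀ n : ℕ, 0 < n → ∀ N : ℕ, (N : ℝ) < (χ + δ n) ^ n →
        ∀ c : (Fin n → ℝ) → Fin N,
          ∃ f : M → (Fin n → ℝ),
            (∀ x y : M, c (f x) = c (f y)) ∧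
            ∀ x y : M, dist (f x) (f y) = dist x y := by
  obtain ⟨g, hg, hcol⟩ := exists_two_le_monochromatic_isometry_of_mul_pow_lt M hM
  set m := Fintype.card M
  have hg₂ : (2 : ℝ) ≤ g := by exact_mod_cast hg
  obtain ⟨χ, hχ, δ, hδ, hpow⟩ := exists_one_lt_tendsto_pow_le ((g : ℝ) / (g - 1))
    (by rw [one_lt_div (by linarith)]; linarith) (show 0 < m by omega)
  refine ⟨χ, hχ, δ, hδ, fun n _ N hN c => ?_⟩
  obtain ⟨Φ, hΦ⟩ := exists_isometry_pi_fin (ι := Fin (n / m) × M) (α := ℝ) (n := n)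
    (by simpa using Nat.div_mul_le_self n m)
  have hNg : N * (g - 1) ^ (n / m) < g ^ (n / m) := by
    have := hN.trans_le (hpow n)
    rw [div_pow, lt_div_iff₀ (pow_pos (by linarith) _)] at this
    have hcast : ((g - 1 : ℕ) : ℝ) = g - 1 := by rw [Nat.cast_sub (by omega), Nat.cast_one]
    exact_mod_cast (hcast ▸ this)
  obtain ⟨f, hf, hfc⟩ := hcol (n / m) N hNg (c ∘ Φ ∘ Function.uncurry)
  exact ⟨Φ ∘ Function.uncurry ∘ f, hfc, (hΦ.comp (isometry_uncurry.comp hf)).dist_eq⟩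
end

section
/- Let M be a finite metric space with at least two points, let d(M) be its diameter, and let l(M) be the smallest l > 0 such that any two points of M are connected by a chain of points of M with consecutive distances at most l. Fix reals d' and l' with 0 < d' < d(M) and l' > l(M), and let C = [0, d']^n and 𝒞 = ⋃_{v ∈ Z^n} (C + (d'+l')v) ⊂ R^n. Then 𝒞 contains no isometric copy of M with respect to the Chebyshev metric. -/
/-!
Index each point of the copy by the cube of `𝒞` containing it. Points of distinct cubes differ by
at least the gap `l' = (d' + l') - d'` in some coordinate, so they are more than `l(M)` apart; hence
a chain with steps `≤ l(M)` never leaves its cube. Joining a diametral pair of `M` by such a chain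
puts both points in one cube of Chebyshev diameter `d' < d(M)`, which is absurd.
-/

open Set

lemma sub_le_sub_of_mem_Icc_of_lt {a d x y : ℝ} {v w : ℤ} (ha : 0 ≤ a)
    (hx : x ∈ Icc (a * v) (a * v + d)) (hy : y ∈ Icc (a * w) (a * w + d)) (hvw : v < w) :
    a - d ≤ y - x := by
  have hstep : a * ((v : ℝ) + 1) ≤ a * w :=
    mul_le_mul_of_nonneg_left (by exact_mod_cast hvw) ha
  linarith [hx.2, hy.1]

lemma sub_le_dist_of_mem_Icc_of_ne {a d x y : ℝ} {v w : ℤ} (ha : 0 ≤ a)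
    (hx : x ∈ Icc (a * v) (a * v + d)) (hy : y ∈ Icc (a * w) (a * w + d)) (hvw : v ≠ w) :
    a - d ≤ dist x y := by
  rw [Real.dist_eq]
  rcases hvw.lt_or_gt with hlt | hgt
  · rw [abs_sub_comm]
    exact (sub_le_sub_of_mem_Icc_of_lt ha hx hy hlt).trans (le_abs_self _)
  · exact (sub_le_sub_of_mem_Icc_of_lt ha hy hx hgt).trans (le_abs_self _)

section Cubes

variable {ι : Type*} [Fintype ι] {a d : ℝ} {x y : ι → ℝ} {v w : ι → ℤ}

lemma sub_le_dist_of_mem_cubes_of_ne (ha : 0 ≤ a)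
    (hx : ∀ i, x i ∈ Icc (a * v i) (a * v i + d)) (hy : ∀ i, y i ∈ Icc (a * w i) (a * w i + d))
    (hvw : v ≠ w) : a - d ≤ dist x y := by
  obtain ⟨i, hi⟩ := Function.ne_iff.mp hvw
  exact (sub_le_dist_of_mem_Icc_of_ne ha (hx i) (hy i) hi).trans (dist_le_pi_dist x y i)

lemma dist_le_of_mem_same_cube (hd : 0 ≤ d)
    (hx : ∀ i, x i ∈ Icc (a * v i) (a * v i + d)) (hy : ∀ i, y i ∈ Icc (a * v i) (a * v i + d)) :
    dist x y ≤ d := by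
  refine (dist_pi_le_iff hd).2 fun i => ?_
  rw [Real.dist_eq, abs_sub_le_iff]
  constructor <;> linarith [(hx i).1, (hx i).2, (hy i).1, (hy i).2]

end Cubes

lemma eq_of_chain_of_lt_dist {M β : Type*} [PseudoMetricSpace M] (V : M → β) {l : ℝ}
    (hV : ∀ x y, V x ≠ V y → l < dist x y) {t : ℕ} {z : ℕ → M}
    (hz : ∀ i < t, dist (z i) (z (i + 1)) ≤ l) : V (z 0) = V (z t) := by
  induction t with
  | zero => rfl
  | succ k ih =>
    rw [ih fun i hi => hz i (hi.trans k.lt_succ_self)]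
    by_contra hne
    exact (hz k k.lt_succ_self).not_gt (hV _ _ hne)

theorem stmt_14_general (M : Type*) [MetricSpace M]
    (dM : ℝ) (hdM : IsGreatest {r : ℝ | ∃ x y : M, dist x y = r} dM)
    (lM : ℝ)
    (hlM : IsLeast {l : ℝ | 0 < l ∧ ∀ x y : M, ∃ (t : ℕ) (z : ℕ → M),
      z 0 = x ∧ z t = y ∧ ∀ i < t, dist (z i) (z (i + 1)) ≤ l} lM)
    (d' l' : ℝ) (hd'0 : 0 < d') (hd' : d' < dM) (hl' : lM < l')
    (n : ℕ) :
    ¬ ∃ f : M → (Fin n → ℝ),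
        (∀ x y : M, dist (f x) (f y) = dist x y) ∧
        ∀ x : M, ∃ v : Fin n → ℤ, ∀ i : Fin n,
          (d' + l') * (v i : ℝ) ≤ f x i ∧ f x i ≤ (d' + l') * (v i : ℝ) + d' := by
  rintro ⟨f, hiso, hcube⟩
  choose V hV using hcube
  have hperiod : 0 ≤ d' + l' := by linarith [hlM.1.1]
  have hfar : ∀ x y, V x ≠ V y → lM < dist x y := fun x y hne => by
    have := sub_le_dist_of_mem_cubes_of_ne hperiod (hV x) (hV y) hne
    rw [hiso] at this
    linarith
  obtain ⟨x, y, hxy⟩ := hdM.1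
  obtain ⟨t, z, rfl, rfl, hz⟩ := hlM.1.2 x y
  have hsame := eq_of_chain_of_lt_dist V hfar hz
  have hclose := dist_le_of_mem_same_cube hd'0.le (hV (z 0)) (hsame ▸ hV (z t))
  rw [hiso] at hclose
  linarith

/-- The periodic union of cubes `𝒞 = ⋃_{v ∈ ℤ^n} ([0,d']^n + (d'+l')v)` contains
no isometric copy of `M` (Chebyshev metric), where `dM` is the diameter of `M`,
`lM` is the least `l > 0` such that any two points of `M` are joined by a chain
with consecutive distances `≤ l`, and `0 < d' < dM`, `l' > lM`. -/
theorem stmt_14 (M : Type*) [MetricSpace M] [Fintype M]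
    (hM : 2 ≤ Fintype.card M)
    (dM : ℝ) (hdM : IsGreatest {r : ℝ | ∃ x y : M, dist x y = r} dM)
    (lM : ℝ)
    (hlM : IsLeast {l : ℝ | 0 < l ∧ ∀ x y : M, ∃ (t : ℕ) (z : ℕ → M),
      z 0 = x ∧ z t = y ∧ ∀ i < t, dist (z i) (z (i + 1)) ≤ l} lM)
    (d' l' : ℝ) (hd'0 : 0 < d') (hd' : d' < dM) (hl' : lM < l')
    (n : ℕ) (hn : 0 < n) :
    ¬ ∃ f : M → (Fin n → ℝ),
        (∀ x y : M, dist (f x) (f y) = dist x y) ∧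
        ∀ x : M, ∃ v : Fin n → ℤ, ∀ i : Fin n,
          (d' + l') * (v i : ℝ) ≤ f x i ∧ f x i ≤ (d' + l') * (v i : ℝ) + d' :=
  stmt_14_general M dM hdM lM hlM d' l' hd'0 hd' hl' n
end
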